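/- arXiv:2406.16814 — 8 statements merged into one kernel-verified Lean document; each statement's English description precedes it below -/
import Mathlib

section
/- Assume 0 < η_i < 1/‖A_i‖² for i = 1, …, p. Then for all integers n ≥ 0 there holds E[‖z_{n+1}^δ − z_{n+1}‖² + ((n+1)/p) Σ_{i=1}^p η_i ‖A_i(x_n^δ − x_n) − y_i^δ + y_i‖²] ≤ η̄ (n+1) δ² / (c₀ p); in particular E[‖z_n^δ − z_n‖²] ≤ η̄ n δ² / (c₀ p) for all n ≥ 0. -/
open RealInnerProductSpace

/-- Expectation with respect to the first `m` i.i.d. uniformly distributed indices: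
for a quantity `f` determined by the coordinates `i_0, …, i_{m-1}` of the sample path,
`avg p hp m f = p^{-m} ∑_{(i_0,…,i_{m-1}) ∈ {1,…,p}^m} f`. -/
noncomputable def avg (p : ℕ) (hp : 0 < p) (m : ℕ) (f : (ℕ → Fin p) → ℝ) : ℝ :=
  (∑ σ : Fin m → Fin p, f (fun k => if h : k < m then σ ⟨k, h⟩ else ⟨0, hp⟩)) / (p : ℝ) ^ m

lemma avg_zero_idx (p : ℕ) (hp : 0 < p) (f : (ℕ → Fin p) → ℝ) :
    avg p hp 0 f = f (fun _ => ⟨0, hp⟩) := by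
  unfold avg
  rw [Fintype.sum_unique, pow_zero, div_one]
  refine congrArg f ?_
  funext k
  exact dif_neg (Nat.not_lt_zero k)

lemma avg_mono (p : ℕ) (hp : 0 < p) (m : ℕ) {f g : (ℕ → Fin p) → ℝ}
    (h : ∀ ω, f ω ≤ g ω) : avg p hp m f ≤ avg p hp m g := by
  unfold avg
  have hpow : (0:ℝ) ≤ (p : ℝ) ^ m := by positivity
  exact div_le_div_of_nonneg_right (Finset.sum_le_sum fun σ _ => h _) hpow

lemma avg_add_const (p : ℕ) (hp : 0 < p) (m : ℕ) (f : (ℕ → Fin p) → ℝ) (c : ℝ) :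
    avg p hp m (fun ω => f ω + c) = avg p hp m f + c := by
  unfold avg
  have hcard : (Fintype.card (Fin m → Fin p)) = p ^ m := by simp
  rw [Finset.sum_add_distrib, Finset.sum_const, Finset.card_univ, hcard, nsmul_eq_mul]
  have hpow : ((p:ℝ)) ^ m ≠ 0 := by positivity
  push_cast
  field_simp

lemma avg_succ (p : ℕ) (hp : 0 < p) (n : ℕ) (f : (ℕ → Fin p) → ℝ) :
    avg p hp (n + 1) f =
      avg p hp n (fun ω => (∑ j : Fin p, f (Function.update ω n j)) / p) := by
  have hext : ∀ (τ : Fin n → Fin p) (j : Fin p),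
      (fun k => if h : k < n + 1 then (Fin.snoc τ j : Fin (n+1) → Fin p) ⟨k, h⟩
          else (⟨0, hp⟩ : Fin p))
        = Function.update (fun k => if h : k < n then τ ⟨k, h⟩ else (⟨0, hp⟩ : Fin p)) n j := by
    intro τ j
    funext k
    rcases lt_trichotomy k n with hk | hk | hk
    · have h1 : k < n + 1 := by omega
      rw [Function.update_of_ne (by omega)]
      simp only [dif_pos h1, dif_pos hk]
      have he : (⟨k, h1⟩ : Fin (n+1)) = Fin.castSucc ⟨k, hk⟩ := rfl
      rw [he, Fin.snoc_castSucc]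
    · subst hk
      rw [Function.update_self]
      have h1 : k < k + 1 := Nat.lt_succ_self k
      simp only [dif_pos h1]
      have he : (⟨k, h1⟩ : Fin (k+1)) = Fin.last k := rfl
      rw [he, Fin.snoc_last]
    · rw [Function.update_of_ne (by omega)]
      rw [dif_neg (by omega : ¬ k < n + 1), dif_neg (by omega : ¬ k < n)]
  unfold avg
  have h1 : ∑ σ : Fin (n+1) → Fin p, f (fun k => if h : k < n+1 then σ ⟨k,h⟩ else ⟨0,hp⟩)
      = ∑ x : (Fin n → Fin p) × Fin p,
          f (Function.update (fun k => if h : k < n then x.1 ⟨k,h⟩ else ⟨0,hp⟩) n x.2) := by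
    have hbij : Function.Bijective
        (fun x : (Fin n → Fin p) × Fin p => (Fin.snoc x.1 x.2 : Fin (n+1) → Fin p)) :=
      Equiv.bijective ((Equiv.prodComm _ _).trans (Fin.snocEquiv fun _ => Fin p))
    refine (Fintype.sum_bijective _ hbij _ _ (fun x => ?_)).symm
    rw [hext x.1 x.2]
  rw [h1, Fintype.sum_prod_type, ← Finset.sum_div, div_div, pow_succ,
    mul_comm ((p:ℝ) ^ n) (p:ℝ)]

set_option maxHeartbeats 1000000 in
/-- The per-index Hilbert space inequality at the heart of the stability estimate. -/
lemma keyj {X Y : Type*} [NormedAddCommGroup X] [InnerProductSpace ℝ X] [CompleteSpace X]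
    [NormedAddCommGroup Y] [InnerProductSpace ℝ Y] [CompleteSpace Y]
    (A : X →L[ℝ] Y) (η c₀ ν : ℝ) (hη : 0 ≤ η) (hc : 0 < c₀) (hA : η * ‖A‖ ^ 2 ≤ 1 - c₀)
    (hν : 0 ≤ ν) (u v : X) (d : Y) :
    ‖((ν+1) • u - ν • v) - η • A.adjoint (A u - d)‖ ^ 2 + (ν+1) * η * ‖A u - d‖ ^ 2
      ≤ ‖(ν+1) • u - ν • v‖ ^ 2 + ν * η * ‖A v - d‖ ^ 2 + η * ‖d‖ ^ 2 / c₀ := by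
  set w := (ν+1) • u - ν • v with hw
  set a := A u - d with ha
  set b := A v - d with hb
  have hau : A u = a + d := by rw [ha]; abel
  have hav : A v = b + d := by rw [hb]; abel
  have hinner : ⟪w, A.adjoint a⟫ = (ν+1) * ‖a‖^2 - ν * ⟪b, a⟫ + ⟪d, a⟫ := by
    rw [ContinuousLinearMap.adjoint_inner_right]
    have hAw : A w = (ν+1) • (a + d) - ν • (b + d) := by
      rw [hw, map_sub, map_smul, map_smul, hau, hav]
    rw [hAw]
    simp only [inner_sub_left, inner_add_left, real_inner_smul_left,
      real_inner_self_eq_norm_sq]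
    ring
  have hexp : ‖w - η • A.adjoint a‖^2
      = ‖w‖^2 - 2*η*⟪w, A.adjoint a⟫ + η^2*‖A.adjoint a‖^2 := by
    rw [norm_sub_sq_real, real_inner_smul_right, norm_smul, Real.norm_eq_abs, mul_pow, sq_abs]
    ring
  have hTle : ‖A.adjoint a‖ ≤ ‖A‖ * ‖a‖ := by
    calc ‖A.adjoint a‖ ≤ ‖A.adjoint‖ * ‖a‖ := (A.adjoint).le_opNorm a
    _ = ‖A‖ * ‖a‖ := by rw [ContinuousLinearMap.adjoint.norm_map]
  have hT2 : η^2 * ‖A.adjoint a‖^2 ≤ η * (1 - c₀) * ‖a‖^2 := by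
    have h0 : ‖A.adjoint a‖^2 ≤ ‖A‖^2 * ‖a‖^2 := by
      nlinarith [norm_nonneg (A.adjoint a), norm_nonneg a, norm_nonneg A]
    have h1 : η^2 * ‖A.adjoint a‖^2 ≤ η * (η * ‖A‖^2) * ‖a‖^2 := by nlinarith [sq_nonneg η]
    have h2 : η * (η * ‖A‖^2) * ‖a‖^2 ≤ η * (1 - c₀) * ‖a‖^2 := by
      nlinarith [sq_nonneg ‖a‖, hη, hA, mul_nonneg hη (sq_nonneg ‖a‖)]
    linarith
  have hba : 2 * ⟪b, a⟫ ≤ ‖a‖^2 + ‖b‖^2 := by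
    nlinarith [real_inner_le_norm b a, sq_nonneg (‖a‖ - ‖b‖)]
  have hda : -(2 * ⟪d, a⟫) ≤ c₀ * ‖a‖^2 + ‖d‖^2 / c₀ := by
    have h1 : -⟪d, a⟫ ≤ ‖d‖ * ‖a‖ := by
      have h2 := abs_real_inner_le_norm d a
      cases abs_cases (⟪d, a⟫) with
      | inl h => linarith [h.1]
      | inr h => linarith [h.1]
    have h2 : 2*(‖d‖*‖a‖) ≤ c₀ * ‖a‖^2 + ‖d‖^2 / c₀ := by
      have h3 : ‖d‖^2 = c₀ * (‖d‖^2 / c₀) := by field_simp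
      nlinarith [sq_nonneg (c₀ * ‖a‖ - ‖d‖), hc, mul_pos hc hc]
    linarith
  have hm1 : ν * η * (2*⟪b,a⟫) ≤ ν * η * (‖a‖^2+‖b‖^2) :=
    mul_le_mul_of_nonneg_left hba (mul_nonneg hν hη)
  have hm2 : η * (-(2*⟪d,a⟫)) ≤ η * (c₀*‖a‖^2 + ‖d‖^2/c₀) :=
    mul_le_mul_of_nonneg_left hda hη
  rw [hexp, hinner]
  ring_nf at hT2 hm1 hm2 ⊢
  linarith [hT2, hm1, hm2]

set_option maxHeartbeats 2000000 in
/-- **Stability estimate for the auxiliary sequences (proof of Lemma IMA.lem1.1).**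
With exact data `y` (for which a solution exists), noisy data `y^δ` with
`‖y^δ i − y i‖ ≤ δ i`, total noise level `δ = (∑ δ i²)^{1/2}`, step sizes
`0 < η i < 1/‖A i‖²`, `η̄ = max η i`, `c₀ = min (1 − η i ‖A i‖²)`, heavy-ball
iterates `x^δ, x` and auxiliary sequences `z^δ, z` along the sample path, for all
`n ≥ 0`:
`E[‖z^δ_{n+1} − z_{n+1}‖² + ((n+1)/p) ∑_i η_i ‖A_i(x^δ_n − x_n) − y^δ_i + y_i‖²]
   ≤ η̄ (n+1) δ² / (c₀ p)`;  in particular `E[‖z^δ_n − z_n‖²] ≤ η̄ n δ² / (c₀ p)`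
for all `n ≥ 0`. -/
theorem stmt_1 {p : ℕ} (hp : 0 < p) {X : Type*} [NormedAddCommGroup X]
    [InnerProductSpace ℝ X] [CompleteSpace X]
    {Y : Fin p → Type*} [∀ i, NormedAddCommGroup (Y i)] [∀ i, InnerProductSpace ℝ (Y i)]
    [∀ i, CompleteSpace (Y i)]
    (A : ∀ i, X →L[ℝ] Y i) (y yδ : ∀ i, Y i) (δi : Fin p → ℝ) (δ : ℝ)
    (hnoise : ∀ i, ‖yδ i - y i‖ ≤ δi i)
    (hδ : δ = Real.sqrt (∑ i, (δi i) ^ 2))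
    (xsol : X) (hsol : ∀ i, (A i) xsol = y i)
    (η : Fin p → ℝ) (hη : ∀ i, 0 < η i ∧ η i < 1 / ‖A i‖ ^ 2)
    (ηbar c₀ : ℝ)
    (hηbar : IsGreatest (Set.range η) ηbar)
    (hc₀ : IsLeast (Set.range fun i => 1 - η i * ‖A i‖ ^ 2) c₀)
    (x₀ : X) (xδ x zδ z : (ℕ → Fin p) → ℕ → X)
    (hxδ0 : ∀ ω, xδ ω 0 = x₀) (hx0 : ∀ ω, x ω 0 = x₀)
    (hzδ0 : ∀ ω, zδ ω 0 = x₀) (hz0 : ∀ ω, z ω 0 = x₀)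
    (hxδ : ∀ ω, ∀ n : ℕ, xδ ω (n + 1) = xδ ω n
      - (((n : ℝ) + 2)⁻¹ * η (ω n)) • ((A (ω n)).adjoint ((A (ω n)) (xδ ω n) - yδ (ω n)))
      + ((n : ℝ) / ((n : ℝ) + 2)) • (xδ ω n - xδ ω (n - 1)))
    (hx : ∀ ω, ∀ n : ℕ, x ω (n + 1) = x ω n
      - (((n : ℝ) + 2)⁻¹ * η (ω n)) • ((A (ω n)).adjoint ((A (ω n)) (x ω n) - y (ω n)))
      + ((n : ℝ) / ((n : ℝ) + 2)) • (x ω n - x ω (n - 1)))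
    (hzδ : ∀ ω, ∀ n : ℕ, zδ ω (n + 1) =
      zδ ω n - η (ω n) • ((A (ω n)).adjoint ((A (ω n)) (xδ ω n) - yδ (ω n))))
    (hz : ∀ ω, ∀ n : ℕ, z ω (n + 1) =
      z ω n - η (ω n) • ((A (ω n)).adjoint ((A (ω n)) (x ω n) - y (ω n)))) :
    (∀ n : ℕ,
      avg p hp (n + 1) (fun ω => ‖zδ ω (n + 1) - z ω (n + 1)‖ ^ 2
          + (((n : ℝ) + 1) / p) * ∑ i, η i * ‖(A i) (xδ ω n - x ω n) - yδ i + y i‖ ^ 2)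
        ≤ ηbar * ((n : ℝ) + 1) * δ ^ 2 / (c₀ * p)) ∧
    (∀ n : ℕ,
      avg p hp n (fun ω => ‖zδ ω n - z ω n‖ ^ 2) ≤ ηbar * n * δ ^ 2 / (c₀ * p)) := by
  have hppos : (0:ℝ) < (p:ℝ) := by exact_mod_cast hp
  have hηpos : ∀ i, 0 < η i := fun i => (hη i).1
  have hAi : ∀ i, 0 < ‖A i‖ := by
    intro i
    rcases (norm_nonneg (A i)).lt_or_eq with h | h
    · exact h
    · exfalso
      have h2 := (hη i).2
      rw [← h] at h2
      simp at h2
      linarith [(hη i).1]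
  have hc0pos : 0 < c₀ := by
    obtain ⟨i0, hi0⟩ := hc₀.1
    have h2 := (hη i0).2
    rw [lt_div_iff₀ (pow_pos (hAi i0) 2)] at h2
    have hi0' : 1 - η i0 * ‖A i0‖ ^ 2 = c₀ := hi0
    linarith
  have hηA : ∀ i, η i * ‖A i‖^2 ≤ 1 - c₀ := by
    intro i
    have h : c₀ ≤ 1 - η i * ‖A i‖ ^ 2 := hc₀.2 ⟨i, rfl⟩
    linarith
  have hηbar_ge : ∀ i, η i ≤ ηbar := fun i => hηbar.2 ⟨i, rfl⟩
  have hδ2 : δ^2 = ∑ i, (δi i)^2 := by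
    rw [hδ, Real.sq_sqrt (Finset.sum_nonneg fun i _ => sq_nonneg _)]
  have hdsum : ∑ i, η i * ‖yδ i - y i‖^2 ≤ ηbar * δ^2 := by
    rw [hδ2, Finset.mul_sum]
    refine Finset.sum_le_sum fun i _ => ?_
    have h1 : ‖yδ i - y i‖^2 ≤ (δi i)^2 := by
      nlinarith [hnoise i, norm_nonneg (yδ i - y i)]
    exact mul_le_mul (hηbar_ge i) h1 (sq_nonneg _) (le_trans (hηpos i).le (hηbar_ge i))
  -- dependence on finitely many coordinates
  have hdep : ∀ n : ℕ, ∀ ω1 ω2 : ℕ → Fin p, (∀ k, k < n → ω1 k = ω2 k) →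
      xδ ω1 n = xδ ω2 n ∧ x ω1 n = x ω2 n ∧ zδ ω1 n = zδ ω2 n ∧ z ω1 n = z ω2 n := by
    intro n
    induction n using Nat.strong_induction_on with
    | _ n ih =>
      cases n with
      | zero => intro ω1 ω2 _; simp [hxδ0, hx0, hzδ0, hz0]
      | succ m =>
        intro ω1 ω2 hagree
        have hm := ih m (by omega) ω1 ω2 (fun k hk => hagree k (by omega))
        have hm1 := ih (m-1) (by omega) ω1 ω2 (fun k hk => hagree k (by omega))
        have hω : ω1 m = ω2 m := hagree m (by omega)
        refine ⟨?_, ?_, ?_, ?_⟩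
        · rw [hxδ ω1 m, hxδ ω2 m, hω, hm.1, hm1.1]
        · rw [hx ω1 m, hx ω2 m, hω, hm.2.1, hm1.2.1]
        · rw [hzδ ω1 m, hzδ ω2 m, hω, hm.1, hm.2.2.1]
        · rw [hz ω1 m, hz ω2 m, hω, hm.2.1, hm.2.2.2]
  -- the key identity relating the heavy-ball error to the auxiliary error
  have hid : ∀ ω, ∀ n : ℕ,
      ((n:ℝ)+1) • (xδ ω n - x ω n) - (n:ℝ) • (xδ ω (n-1) - x ω (n-1)) = zδ ω n - z ω n := by
    intro ω n
    induction n with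
    | zero => simp [hxδ0, hx0, hzδ0, hz0]
    | succ m ihm =>
      have hT' : (((m:ℝ)+2)⁻¹ * η (ω m)) • ((A (ω m)).adjoint ((A (ω m)) (xδ ω m) - yδ (ω m)))
            - (((m:ℝ)+2)⁻¹ * η (ω m)) • ((A (ω m)).adjoint ((A (ω m)) (x ω m) - y (ω m)))
          = (((m:ℝ)+2)⁻¹ * η (ω m)) • ((A (ω m)).adjoint
              ((A (ω m)) (xδ ω m - x ω m) - (yδ (ω m) - y (ω m)))) := by
        rw [← smul_sub]
        congr 1
        simp only [map_sub]
        abel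
      have he : xδ ω (m+1) - x ω (m+1)
          = (xδ ω m - x ω m)
            - (((m:ℝ)+2)⁻¹ * η (ω m)) • ((A (ω m)).adjoint
                ((A (ω m)) (xδ ω m - x ω m) - (yδ (ω m) - y (ω m))))
            + ((m:ℝ)/((m:ℝ)+2)) • ((xδ ω m - x ω m) - (xδ ω (m-1) - x ω (m-1))) := by
        rw [hxδ ω m, hx ω m, ← hT']
        simp only [smul_sub]
        abel
      have hwrec : zδ ω (m+1) - z ω (m+1)
          = (zδ ω m - z ω m) - η (ω m) • ((A (ω m)).adjoint
              ((A (ω m)) (xδ ω m - x ω m) - (yδ (ω m) - y (ω m)))) := by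
        have hT2' : η (ω m) • ((A (ω m)).adjoint ((A (ω m)) (xδ ω m) - yδ (ω m)))
              - η (ω m) • ((A (ω m)).adjoint ((A (ω m)) (x ω m) - y (ω m)))
            = η (ω m) • ((A (ω m)).adjoint
                ((A (ω m)) (xδ ω m - x ω m) - (yδ (ω m) - y (ω m)))) := by
          rw [← smul_sub]
          congr 1
          simp only [map_sub]
          abel
        rw [hzδ ω m, hz ω m, ← hT2']
        abel
      have hm2 : ((m:ℝ)+2) ≠ 0 := by positivity
      simp only [Nat.add_sub_cancel]
      rw [he, hwrec, ← ihm]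
      push_cast
      match_scalars <;> field_simp <;> try ring
  -- the Lyapunov-type functional
  set F : ℕ → (ℕ → Fin p) → ℝ := fun n ω => ‖zδ ω n - z ω n‖^2
      + ((n:ℝ)/p) * ∑ i, η i * ‖(A i) (xδ ω (n-1) - x ω (n-1)) - (yδ i - y i)‖^2 with hF
  have hFs : ∀ (n : ℕ) (ω : ℕ → Fin p) (j : Fin p),
      F (n+1) (Function.update ω n j)
        = ‖(zδ ω n - z ω n) - η j • ((A j).adjoint
              ((A j) (xδ ω n - x ω n) - (yδ j - y j)))‖^2
          + (((n:ℝ)+1)/p) * ∑ i, η i * ‖(A i) (xδ ω n - x ω n) - (yδ i - y i)‖^2 := by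
    intro n ω j
    have hd := hdep n (Function.update ω n j) ω
      (fun k hk => Function.update_of_ne (by omega) _ _)
    have hj : (Function.update ω n j) n = j := Function.update_self _ _ _
    have hzz : zδ (Function.update ω n j) (n+1) - z (Function.update ω n j) (n+1)
        = (zδ ω n - z ω n) - η j • ((A j).adjoint
            ((A j) (xδ ω n - x ω n) - (yδ j - y j))) := by
      have hT2' : η j • ((A j).adjoint ((A j) (xδ ω n) - yδ j))
            - η j • ((A j).adjoint ((A j) (x ω n) - y j))
          = η j • ((A j).adjoint ((A j) (xδ ω n - x ω n) - (yδ j - y j))) := by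
        rw [← smul_sub]
        congr 1
        simp only [map_sub]
        abel
      rw [hzδ (Function.update ω n j) n, hz (Function.update ω n j) n, hj, hd.1, hd.2.1, hd.2.2.1, hd.2.2.2, ← hT2']
      abel
    simp only [hF, Nat.add_sub_cancel]
    rw [hzz, hd.1, hd.2.1]
    push_cast
    ring
  -- one-step estimate
  have hstep : ∀ (n : ℕ) (ω : ℕ → Fin p),
      (∑ j : Fin p, F (n+1) (Function.update ω n j)) / p
        ≤ F n ω + ηbar * δ^2 / (c₀ * p) := by
    intro n ω
    have hkey : ∀ j : Fin p,
        ‖(zδ ω n - z ω n) - η j • ((A j).adjoint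
            ((A j) (xδ ω n - x ω n) - (yδ j - y j)))‖^2
            + ((n:ℝ)+1) * η j * ‖(A j) (xδ ω n - x ω n) - (yδ j - y j)‖^2
          ≤ ‖zδ ω n - z ω n‖^2
            + (n:ℝ) * η j * ‖(A j) (xδ ω (n-1) - x ω (n-1)) - (yδ j - y j)‖^2
            + η j * ‖yδ j - y j‖^2 / c₀ := by
      intro j
      have hk := keyj (A j) (η j) c₀ (n:ℝ) (hηpos j).le hc0pos (hηA j) (Nat.cast_nonneg n)
        (xδ ω n - x ω n) (xδ ω (n-1) - x ω (n-1)) (yδ j - y j)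
      rwa [hid ω n] at hk
    have hsum := Finset.sum_le_sum (fun j (_ : j ∈ Finset.univ) => hkey j)
    have hL2 : ∑ j : Fin p, (‖(zδ ω n - z ω n) - η j • ((A j).adjoint
            ((A j) (xδ ω n - x ω n) - (yδ j - y j)))‖^2
            + ((n:ℝ)+1) * η j * ‖(A j) (xδ ω n - x ω n) - (yδ j - y j)‖^2)
        = (∑ j : Fin p, ‖(zδ ω n - z ω n) - η j • ((A j).adjoint
            ((A j) (xδ ω n - x ω n) - (yδ j - y j)))‖^2)
          + ((n:ℝ)+1) * ∑ i, η i * ‖(A i) (xδ ω n - x ω n) - (yδ i - y i)‖^2 := by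
      rw [Finset.sum_add_distrib]
      congr 1
      rw [Finset.mul_sum]
      exact Finset.sum_congr rfl fun i _ => by ring
    have hR2 : ∑ j : Fin p, (‖zδ ω n - z ω n‖^2
            + (n:ℝ) * η j * ‖(A j) (xδ ω (n-1) - x ω (n-1)) - (yδ j - y j)‖^2
            + η j * ‖yδ j - y j‖^2 / c₀)
        = (p:ℝ) * ‖zδ ω n - z ω n‖^2
          + (n:ℝ) * (∑ i, η i * ‖(A i) (xδ ω (n-1) - x ω (n-1)) - (yδ i - y i)‖^2)
          + (∑ i, η i * ‖yδ i - y i‖^2) / c₀ := by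
      rw [Finset.sum_add_distrib, Finset.sum_add_distrib, Finset.sum_const,
        Finset.card_univ, Fintype.card_fin, nsmul_eq_mul]
      rw [Finset.sum_div]
      congr 1
      rw [Finset.mul_sum]
      congr 1
      exact Finset.sum_congr rfl fun i _ => by ring
    have hFsum : ∑ j : Fin p, F (n+1) (Function.update ω n j)
        = (∑ j : Fin p, ‖(zδ ω n - z ω n) - η j • ((A j).adjoint
            ((A j) (xδ ω n - x ω n) - (yδ j - y j)))‖^2)
          + (p:ℝ) * ((((n:ℝ)+1)/p)
              * ∑ i, η i * ‖(A i) (xδ ω n - x ω n) - (yδ i - y i)‖^2) := by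
      rw [Finset.sum_congr rfl (fun j _ => hFs n ω j), Finset.sum_add_distrib,
        Finset.sum_const, Finset.card_univ, Fintype.card_fin, nsmul_eq_mul]
    have hp' : (p:ℝ) * ((((n:ℝ)+1)/p)
          * ∑ i, η i * ‖(A i) (xδ ω n - x ω n) - (yδ i - y i)‖^2)
        = ((n:ℝ)+1) * ∑ i, η i * ‖(A i) (xδ ω n - x ω n) - (yδ i - y i)‖^2 := by
      field_simp
    have hFn : (F n ω + ηbar * δ^2 / (c₀ * p)) * p
        = (p:ℝ) * ‖zδ ω n - z ω n‖^2
          + (n:ℝ) * (∑ i, η i * ‖(A i) (xδ ω (n-1) - x ω (n-1)) - (yδ i - y i)‖^2)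
          + ηbar * δ^2 / c₀ := by
      simp only [hF]
      field_simp
    have hdc : (∑ i, η i * ‖yδ i - y i‖^2) / c₀ ≤ ηbar * δ^2 / c₀ :=
      div_le_div_of_nonneg_right hdsum hc0pos.le
    rw [div_le_iff₀ hppos, hFsum, hp', hFn]
    rw [hL2] at hsum
    rw [hR2] at hsum
    linarith
  -- the main induction
  have hmain : ∀ n : ℕ, avg p hp n (F n) ≤ ηbar * n * δ^2 / (c₀ * p) := by
    intro n
    induction n with
    | zero =>
      rw [avg_zero_idx]
      simp [hF, hzδ0, hz0]
    | succ m ihm =>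
      rw [avg_succ]
      calc avg p hp m (fun ω => (∑ j : Fin p, F (m+1) (Function.update ω m j)) / p)
          ≤ avg p hp m (fun ω => F m ω + ηbar * δ^2 / (c₀ * p)) :=
            avg_mono p hp m (fun ω => hstep m ω)
        _ = avg p hp m (F m) + ηbar * δ^2 / (c₀ * p) := avg_add_const p hp m (F m) _
        _ ≤ ηbar * m * δ^2 / (c₀ * p) + ηbar * δ^2 / (c₀ * p) := by linarith
        _ = ηbar * (↑(m+1)) * δ^2 / (c₀ * p) := by push_cast; ring
  constructor
  · intro n
    have heq : (fun ω => ‖zδ ω (n + 1) - z ω (n + 1)‖ ^ 2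
          + (((n : ℝ) + 1) / p) * ∑ i, η i * ‖(A i) (xδ ω n - x ω n) - yδ i + y i‖ ^ 2)
        = F (n+1) := by
      funext ω
      simp only [hF, Nat.add_sub_cancel, sub_add]
      push_cast
      ring
    rw [heq]
    calc avg p hp (n+1) (F (n+1)) ≤ ηbar * (↑(n+1)) * δ^2 / (c₀ * p) := hmain (n+1)
      _ = ηbar * ((n:ℝ)+1) * δ^2 / (c₀ * p) := by push_cast; ring
  · intro n
    calc avg p hp n (fun ω => ‖zδ ω n - z ω n‖ ^ 2)
        ≤ avg p hp n (F n) := by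
          refine avg_mono p hp n fun ω => ?_
          simp only [hF]
          have h1 : 0 ≤ ((n:ℝ)/p)
              * ∑ i, η i * ‖(A i) (xδ ω (n-1) - x ω (n-1)) - (yδ i - y i)‖^2 :=
            mul_nonneg (by positivity) (Finset.sum_nonneg fun i _ =>
              mul_nonneg (hηpos i).le (sq_nonneg _))
          linarith
      _ ≤ ηbar * n * δ^2 / (c₀ * p) := hmain n
end

section
/- Assume 0 < η_i < 1/‖A_i‖² for i = 1, …, p. Then for all integers n ≥ 0 there holds E[‖x_n^δ − x_n‖²] ≤ η̄ n δ² / (c₀ p). -/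
namespace StabAux

variable {p : ℕ} (hp : 0 < p)

def pad (hp : 0 < p) (m : ℕ) (σ : Fin m → Fin p) : ℕ → Fin p :=
  fun k => if h : k < m then σ ⟨k, h⟩ else ⟨0, hp⟩

lemma avg_eq (m : ℕ) (f : (ℕ → Fin p) → ℝ) :
    avg p hp m f = (∑ σ : Fin m → Fin p, f (pad hp m σ)) / (p : ℝ) ^ m := rfl

lemma avg_mono {m : ℕ} {f g : (ℕ → Fin p) → ℝ}
    (h : ∀ σ : Fin m → Fin p, f (pad hp m σ) ≤ g (pad hp m σ)) :
    avg p hp m f ≤ avg p hp m g := by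
  rw [avg_eq, avg_eq]
  exact div_le_div_of_nonneg_right (Finset.sum_le_sum fun σ _ => h σ) (by positivity) |>.trans_eq rfl

lemma avg_nonneg {m : ℕ} {f : (ℕ → Fin p) → ℝ}
    (h : ∀ σ : Fin m → Fin p, 0 ≤ f (pad hp m σ)) : 0 ≤ avg p hp m f := by
  rw [avg_eq]
  have : (0:ℝ) ≤ ∑ σ : Fin m → Fin p, f (pad hp m σ) := Finset.sum_nonneg fun σ _ => h σ
  positivity

lemma avg_const (m : ℕ) (c : ℝ) : avg p hp m (fun _ => c) = c := by
  rw [avg_eq, Finset.sum_const, Finset.card_univ]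
  have h1 : Fintype.card (Fin m → Fin p) = p ^ m := by
    rw [Fintype.card_fun]; simp
  rw [h1, nsmul_eq_mul]
  have hp' : ((p:ℝ)) ^ m ≠ 0 := by positivity
  push_cast
  field_simp

lemma avg_add (m : ℕ) (f g : (ℕ → Fin p) → ℝ) :
    avg p hp m (fun ω => f ω + g ω) = avg p hp m f + avg p hp m g := by
  rw [avg_eq, avg_eq, avg_eq, Finset.sum_add_distrib, add_div]

lemma avg_const_mul (m : ℕ) (c : ℝ) (f : (ℕ → Fin p) → ℝ) :
    avg p hp m (fun ω => c * f ω) = c * avg p hp m f := by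
  rw [avg_eq, avg_eq, ← Finset.mul_sum, mul_div_assoc]

lemma avg_sum (m : ℕ) (s : Finset ℕ) (f : ℕ → (ℕ → Fin p) → ℝ) :
    avg p hp m (fun ω => ∑ k ∈ s, f k ω) = ∑ k ∈ s, avg p hp m (f k) := by
  simp only [avg_eq]
  rw [← Finset.sum_div, Finset.sum_comm]

lemma pad_snoc (m : ℕ) (τ : Fin m → Fin p) (j : Fin p) :
    pad hp (m+1) (Fin.snoc τ j) = Function.update (pad hp m τ) m j := by
  funext k
  rcases lt_trichotomy k m with hk | hk | hk
  · rw [Function.update_of_ne (by omega)]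
    simp only [pad, dif_pos hk, dif_pos (by omega : k < m + 1)]
    have : (⟨k, by omega⟩ : Fin (m+1)) = Fin.castSucc ⟨k, hk⟩ := rfl
    rw [this, Fin.snoc_castSucc]
  · subst hk
    rw [Function.update_self]
    simp only [pad, dif_pos (by omega : k < k + 1)]
    have : (⟨k, by omega⟩ : Fin (k+1)) = Fin.last k := rfl
    rw [this, Fin.snoc_last]
  · rw [Function.update_of_ne (by omega)]
    simp only [pad, dif_neg (by omega : ¬ k < m + 1), dif_neg (by omega : ¬ k < m)]

lemma avg_succ (m : ℕ) (F : (ℕ → Fin p) → ℝ) :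
    avg p hp (m+1) F
      = avg p hp m (fun ω => (∑ j : Fin p, F (Function.update ω m j)) / p) := by
  rw [avg_eq, avg_eq]
  have h1 : ∑ σ : Fin (m+1) → Fin p, F (pad hp (m+1) σ)
      = ∑ q : Fin p × (Fin m → Fin p), F (pad hp (m+1) (Fin.snoc q.2 q.1)) := by
    rw [← Equiv.sum_comp (Fin.snocEquiv (fun _ => Fin p)) (fun σ => F (pad hp (m+1) σ))]
    rfl
  rw [h1, Fintype.sum_prod_type_right]
  have h2 : ∀ τ : Fin m → Fin p, ∑ j : Fin p, F (pad hp (m+1) (Fin.snoc τ j))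
      = ∑ j : Fin p, F (Function.update (pad hp m τ) m j) := by
    intro τ; exact Finset.sum_congr rfl fun j _ => by rw [pad_snoc]
  rw [Finset.sum_congr rfl fun τ _ => h2 τ]
  rw [Finset.sum_div, Finset.sum_div]
  apply Finset.sum_congr rfl
  intro τ _
  rw [pow_succ, div_div, mul_comm ((p:ℝ)^m)]

/-- locality: `F` only depends on coordinates `< k`. -/
def Loc (k : ℕ) (F : (ℕ → Fin p) → ℝ) : Prop :=
  ∀ ω ω' : ℕ → Fin p, (∀ m < k, ω m = ω' m) → F ω = F ω'

lemma avg_congr {m : ℕ} {f g : (ℕ → Fin p) → ℝ}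
    (h : ∀ σ : Fin m → Fin p, f (pad hp m σ) = g (pad hp m σ)) :
    avg p hp m f = avg p hp m g :=
  le_antisymm (avg_mono hp fun σ => (h σ).le) (avg_mono hp fun σ => (h σ).ge)

lemma avg_of_loc {k : ℕ} {F : (ℕ → Fin p) → ℝ} (hF : Loc k F) :
    ∀ n, k ≤ n → avg p hp n F = avg p hp k F := by
  have key : ∀ d, avg p hp (k + d) F = avg p hp k F := by
    intro d
    induction d with
    | zero => rfl
    | succ m ih =>
      rw [show k + (m+1) = (k+m)+1 from rfl, avg_succ, ← ih]
      apply avg_congr hp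
      intro σ
      have hupd : ∀ j, F (Function.update (pad hp (k+m) σ) (k+m) j) = F (pad hp (k+m) σ) := by
        intro j
        apply hF
        intro l hl
        rw [Function.update_of_ne (by omega)]
      rw [Finset.sum_congr rfl fun j _ => hupd j, Finset.sum_const, Finset.card_univ,
        Fintype.card_fin, nsmul_eq_mul]
      field_simp
  intro n hn
  obtain ⟨d, rfl⟩ := Nat.exists_eq_add_of_le hn
  exact key d

theorem scalar_step (k η ηb c d W S IS IZ nA G U : ℝ) (hη : 0 < η) (hηb : η ≤ ηb) (hc : 0 < c)
    (hA : η * nA ≤ 1 - c) (hk : 0 ≤ k)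
    (hIS : IS ≤ (S^2 + W^2)/2) (hIZ : -IZ ≤ d * W) (hG : G ≤ η^2 * (nA * W^2)) :
    U - 2*(η*((k+1)*W^2 - k*IS + IZ)) + G
      ≤ U + ηb*d^2/c - (k+1)*η*W^2 + k*η*S^2 := by
  have h1 : η^2 * (nA * W^2) ≤ η * ((1-c) * W^2) := by
    have := mul_le_mul_of_nonneg_left hA (by positivity : (0:ℝ) ≤ η * W^2)
    nlinarith
  have h2 : η * (2*d*W - c*W^2) ≤ η * (d^2/c) := by
    have h : 2*d*W - c*W^2 ≤ d^2/c := by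
      rw [le_div_iff₀ hc]; nlinarith [sq_nonneg (c*W - d)]
    nlinarith
  have h3 : η * (d^2/c) ≤ ηb * d^2/c := by
    rw [mul_div_assoc]
    have : 0 ≤ d^2/c := by positivity
    nlinarith
  nlinarith [mul_le_mul_of_nonneg_left hIZ (by linarith : (0:ℝ) ≤ 2*η),
    mul_le_mul_of_nonneg_left hIS (by positivity : (0:ℝ) ≤ 2*η*k)]

end StabAux

set_option maxHeartbeats 2000000 in
open scoped RealInnerProductSpace in
open StabAux in
/-- **Stability estimate (Lemma IMA.lem1.1).**  Let `X`, `Y i` be real Hilbert spaces,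
`A i : X →L[ℝ] Y i`, exact data `y` with a solution, noisy data `y^δ` with
`‖y^δ i − y i‖ ≤ δ i` and total noise level `δ = (∑ δ i²)^{1/2}`.  Assume
`0 < η i < 1/‖A i‖²`, and let `η̄ = max η i`, `c₀ = min (1 − η i ‖A i‖²)`.  Let `x^δ`
and `x` be the stochastic heavy-ball iterates with noisy and exact data respectively
(same sample path, starting from `x₀`).  Then for all `n ≥ 0`,
`E[‖x^δ_n − x_n‖²] ≤ η̄ n δ² / (c₀ p)`. -/
theorem stmt_2 {p : ℕ} (hp : 0 < p) {X : Type*} [NormedAddCommGroup X]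
    [InnerProductSpace ℝ X] [CompleteSpace X]
    {Y : Fin p → Type*} [∀ i, NormedAddCommGroup (Y i)] [∀ i, InnerProductSpace ℝ (Y i)]
    [∀ i, CompleteSpace (Y i)]
    (A : ∀ i, X →L[ℝ] Y i) (y yδ : ∀ i, Y i) (δi : Fin p → ℝ) (δ : ℝ)
    (hnoise : ∀ i, ‖yδ i - y i‖ ≤ δi i)
    (hδ : δ = Real.sqrt (∑ i, (δi i) ^ 2))
    (xsol : X) (hsol : ∀ i, (A i) xsol = y i)
    (η : Fin p → ℝ) (hη : ∀ i, 0 < η i ∧ η i < 1 / ‖A i‖ ^ 2)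
    (ηbar c₀ : ℝ)
    (hηbar : IsGreatest (Set.range η) ηbar)
    (hc₀ : IsLeast (Set.range fun i => 1 - η i * ‖A i‖ ^ 2) c₀)
    (x₀ : X) (xδ x : (ℕ → Fin p) → ℕ → X)
    (hxδ0 : ∀ ω, xδ ω 0 = x₀) (hx0 : ∀ ω, x ω 0 = x₀)
    (hxδ : ∀ ω, ∀ n : ℕ, xδ ω (n + 1) = xδ ω n
      - (((n : ℝ) + 2)⁻¹ * η (ω n)) • ((A (ω n)).adjoint ((A (ω n)) (xδ ω n) - yδ (ω n)))
      + ((n : ℝ) / ((n : ℝ) + 2)) • (xδ ω n - xδ ω (n - 1)))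
    (hx : ∀ ω, ∀ n : ℕ, x ω (n + 1) = x ω n
      - (((n : ℝ) + 2)⁻¹ * η (ω n)) • ((A (ω n)).adjoint ((A (ω n)) (x ω n) - y (ω n)))
      + ((n : ℝ) / ((n : ℝ) + 2)) • (x ω n - x ω (n - 1))) :
    ∀ n : ℕ,
      avg p hp n (fun ω => ‖xδ ω n - x ω n‖ ^ 2) ≤ ηbar * n * δ ^ 2 / (c₀ * p) := by
  -- abbreviations
  set z : ∀ i, Y i := fun i => yδ i - y i with hz
  set e : (ℕ → Fin p) → ℕ → X := fun ω n => xδ ω n - x ω n with he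
  set u : (ℕ → Fin p) → ℕ → X :=
    fun ω n => ((n:ℝ)+1) • e ω n - (n:ℝ) • e ω (n-1) with hu
  -- basic constants
  have hδi : ∀ i, 0 ≤ δi i := fun i => le_trans (norm_nonneg _) (hnoise i)
  have hδ2 : δ^2 = ∑ i, (δi i)^2 := by
    rw [hδ, Real.sq_sqrt (Finset.sum_nonneg fun i _ => by positivity)]
  have hηbar_ge : ∀ i, η i ≤ ηbar := fun i => hηbar.2 ⟨i, rfl⟩
  have hc₀le : ∀ i, η i * ‖A i‖^2 ≤ 1 - c₀ := by
    intro i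
    have := hc₀.2 ⟨i, rfl⟩
    simp only at this
    linarith
  have hApos : ∀ i, 0 < ‖A i‖^2 := by
    intro i
    rcases (hη i) with ⟨h1, h2⟩
    by_contra h
    push_neg at h
    have h0 : ‖A i‖^2 = 0 := le_antisymm h (by positivity)
    rw [h0] at h2
    simp at h2
    linarith
  have hc₀pos : 0 < c₀ := by
    obtain ⟨i₀, hi₀⟩ := hc₀.1
    simp only at hi₀
    rcases hη i₀ with ⟨h1, h2⟩
    have h3 : η i₀ * ‖A i₀‖^2 < 1 := (lt_div_iff₀ (hApos i₀)).mp h2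
    linarith
  have hηbar_pos : 0 < ηbar := by
    obtain ⟨i₀, hi₀⟩ := hηbar.1
    linarith [(hη i₀).1, hi₀ ▸ (hη i₀).1]
  -- deterministic facts
  have e0 : ∀ ω, e ω 0 = 0 := by
    intro ω; simp [he, hxδ0, hx0]
  have erec : ∀ ω n, e ω (n+1) = e ω n
      - (((n:ℝ)+2)⁻¹ * η (ω n)) • ((A (ω n)).adjoint ((A (ω n)) (e ω n) - z (ω n)))
      + ((n:ℝ)/((n:ℝ)+2)) • (e ω n - e ω (n-1)) := by
    intro ω n
    have harg : (A (ω n)) (xδ ω n - x ω n) - (yδ (ω n) - y (ω n))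
        = ((A (ω n)) (xδ ω n) - yδ (ω n)) - ((A (ω n)) (x ω n) - y (ω n)) := by
      rw [map_sub]; abel
    simp only [he, hz]
    rw [hxδ ω n, hx ω n]
    simp only [map_sub, smul_sub]
    abel
  have loc : ∀ n : ℕ, ∀ ω ω' : ℕ → Fin p, (∀ m, m < n → ω m = ω' m) →
      xδ ω n = xδ ω' n ∧ x ω n = x ω' n := by
    intro n
    induction n using Nat.strong_induction_on with
    | _ n ih =>
      match n with
      | 0 => intro ω ω' _; exact ⟨by rw [hxδ0, hxδ0], by rw [hx0, hx0]⟩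
      | Nat.succ n =>
        intro ω ω' hω
        obtain ⟨h1, h2⟩ := ih n (by omega) ω ω' (fun m hm => hω m (by omega))
        obtain ⟨h3, h4⟩ := ih (n-1) (by omega) ω ω' (fun m hm => hω m (by omega))
        have h5 := hω n (by omega)
        constructor
        · rw [hxδ ω n, hxδ ω' n, h1, h3, h5]
        · rw [hx ω n, hx ω' n, h2, h4, h5]
  have eloc : ∀ n : ℕ, ∀ ω ω' : ℕ → Fin p, (∀ m, m < n → ω m = ω' m) →
      e ω n = e ω' n := by
    intro n ω ω' h
    obtain ⟨h1, h2⟩ := loc n ω ω' h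
    simp only [he, h1, h2]
  have urec : ∀ ω n, u ω (n+1) = u ω n
      - η (ω n) • ((A (ω n)).adjoint ((A (ω n)) (e ω n) - z (ω n))) := by
    intro ω n
    have hne : ((n:ℝ)+2) ≠ 0 := by positivity
    simp only [hu, Nat.add_sub_cancel]
    push_cast
    rw [erec ω n]
    match_scalars <;> (field_simp; try ring)
  have usum : ∀ ω n, ∑ k ∈ Finset.range (n+1), u ω k = ((n:ℝ)+1) • e ω n := by
    intro ω n
    induction n with
    | zero => simp [hu]
    | succ n ih =>
      rw [Finset.sum_range_succ, ih]
      simp only [hu, Nat.add_sub_cancel]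
      push_cast
      module
  -- pathwise one-step inequality
  have D5 : ∀ (k : ℕ) (i : Fin p) (v vp : X),
      ‖(((k:ℝ)+1)•v - (k:ℝ)•vp) - η i • ((A i).adjoint ((A i) v - z i))‖^2
      ≤ ‖((k:ℝ)+1)•v - (k:ℝ)•vp‖^2 + ηbar*(δi i)^2/c₀
        - ((k:ℝ)+1)*(η i)*‖(A i) v - z i‖^2 + (k:ℝ)*(η i)*‖(A i) vp - z i‖^2 := by
    intro k i v vp
    set uu : X := ((k:ℝ)+1)•v - (k:ℝ)•vp with huu
    set w : Y i := (A i) v - z i with hw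
    set s : Y i := (A i) vp - z i with hs
    have hz' : ‖z i‖ ≤ δi i := hnoise i
    have hAuu : (A i) uu = ((k:ℝ)+1)•w - (k:ℝ)•s + z i := by
      rw [huu, map_sub, map_smul, map_smul, hw, hs]
      module
    have hinner : ⟪uu, η i • ((A i).adjoint w)⟫
        = η i * (((k:ℝ)+1)*‖w‖^2 - (k:ℝ)*⟪s, w⟫ + ⟪z i, w⟫) := by
      rw [real_inner_smul_right]
      congr 1
      rw [real_inner_comm, ContinuousLinearMap.adjoint_inner_left, hAuu]
      simp only [inner_add_right, inner_sub_right, real_inner_smul_right,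
        real_inner_self_eq_norm_sq, real_inner_comm w s, real_inner_comm w (z i)]
      try ring
    have hnx : ‖η i • ((A i).adjoint w)‖^2 ≤ (η i)^2 * (‖A i‖^2 * ‖w‖^2) := by
      rw [norm_smul]
      have h1 : ‖(A i).adjoint w‖ ≤ ‖A i‖ * ‖w‖ := by
        calc ‖(A i).adjoint w‖ ≤ ‖(A i).adjoint‖ * ‖w‖ :=
              ((A i).adjoint).le_opNorm w
          _ = ‖A i‖ * ‖w‖ := by
              rw [show ‖(A i).adjoint‖ = ‖A i‖ from
                LinearIsometryEquiv.norm_map ContinuousLinearMap.adjoint (A i)]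
      have h2 : ‖η i‖ = η i := by
        rw [Real.norm_eq_abs]; exact abs_of_pos (hη i).1
      rw [h2, mul_pow]
      have h3 : ‖(A i).adjoint w‖^2 ≤ (‖A i‖ * ‖w‖)^2 :=
        pow_le_pow_left₀ (norm_nonneg _) h1 2
      rw [mul_pow] at h3
      exact mul_le_mul_of_nonneg_left h3 (sq_nonneg (η i))
    have hIZ : -⟪z i, w⟫ ≤ δi i * ‖w‖ := by
      have h1 := abs_real_inner_le_norm (z i) w
      have h2 := mul_le_mul_of_nonneg_right hz' (norm_nonneg w)
      linarith [neg_abs_le ⟪z i, w⟫]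
    have hIS : ⟪s, w⟫ ≤ (‖s‖^2 + ‖w‖^2)/2 := by
      have h1 := real_inner_le_norm s w
      nlinarith [sq_nonneg (‖s‖ - ‖w‖)]
    rw [norm_sub_sq_real, hinner]
    exact scalar_step (k:ℝ) (η i) ηbar c₀ (δi i) ‖w‖ ‖s‖ ⟪s, w⟫ ⟪z i, w⟫
      (‖A i‖^2) _ _ (hη i).1 (hηbar_ge i) hc₀pos (hc₀le i) (Nat.cast_nonneg k)
      hIS hIZ hnx
  ------------------------------------------------------------------
  -- expectations
  set C2 : ℝ := ηbar * δ^2 / (c₀ * p) with hC2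
  have hC2nn : 0 ≤ C2 := by
    rw [hC2]
    have : (0:ℝ) < p := by exact_mod_cast hp
    positivity
  set UU : ℕ → ℝ := fun k => avg p hp k (fun ω => ‖u ω k‖^2) with hUU
  set PP : ℕ → ℝ := fun k =>
    avg p hp k (fun ω => (∑ i, η i * ‖(A i) (e ω k) - z i‖^2)/p) with hPP
  set QQ : ℕ → ℝ := fun k =>
    avg p hp k (fun ω => (∑ i, η i * ‖(A i) (e ω (k-1)) - z i‖^2)/p) with hQQ
  have stepA : ∀ k : ℕ, UU (k+1) ≤ UU k + (C2 + ((-((k:ℝ)+1)) * PP k + (k:ℝ) * QQ k)) := by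
    intro k
    have hpR : (0:ℝ) < p := by exact_mod_cast hp
    have expand : UU (k+1)
        = avg p hp k (fun ω => (∑ j : Fin p, ‖u (Function.update ω k j) (k+1)‖^2)/p) := by
      rw [hUU]
      exact avg_succ hp k _
    have point : ∀ σ : Fin k → Fin p,
        (∑ j : Fin p, ‖u (Function.update (pad hp k σ) k j) (k+1)‖^2)/p
        ≤ ‖u (pad hp k σ) k‖^2 + (C2
            + ((-((k:ℝ)+1)) * ((∑ i, η i * ‖(A i) (e (pad hp k σ) k) - z i‖^2)/p)
              + (k:ℝ) * ((∑ i, η i * ‖(A i) (e (pad hp k σ) (k-1)) - z i‖^2)/p))) := by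
      intro σ
      set ω := pad hp k σ with hω
      have hkey : ∀ j : Fin p, ‖u (Function.update ω k j) (k+1)‖^2
          ≤ ‖u ω k‖^2 + ηbar*(δi j)^2/c₀
            - ((k:ℝ)+1)*(η j)*‖(A j) (e ω k) - z j‖^2
            + (k:ℝ)*(η j)*‖(A j) (e ω (k-1)) - z j‖^2 := by
        intro j
        have hcoord : (Function.update ω k j) k = j := Function.update_self _ _ _
        have hek : e (Function.update ω k j) k = e ω k :=
          eloc k _ _ (fun m hm => Function.update_of_ne (by omega) _ _)
        have hekm : e (Function.update ω k j) (k-1) = e ω (k-1) :=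
          eloc (k-1) _ _ (fun m hm => Function.update_of_ne (by omega) _ _)
        have hu1 : u (Function.update ω k j) (k+1)
            = u ω k - η j • ((A j).adjoint ((A j) (e ω k) - z j)) := by
          rw [urec (Function.update ω k j) k, hcoord, hek]
          congr 1
          simp only [hu, hek, hekm]
        rw [hu1]
        have hD := D5 k j (e ω k) (e ω (k-1))
        simp only [hu]
        exact hD
      have hsum : (∑ j : Fin p, ‖u (Function.update ω k j) (k+1)‖^2)/p
          ≤ (∑ j : Fin p, (‖u ω k‖^2 + ηbar*(δi j)^2/c₀
              - ((k:ℝ)+1)*(η j)*‖(A j) (e ω k) - z j‖^2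
              + (k:ℝ)*(η j)*‖(A j) (e ω (k-1)) - z j‖^2))/p :=
        div_le_div_of_nonneg_right (Finset.sum_le_sum fun j _ => hkey j) hpR.le
      refine hsum.trans_eq ?_
      rw [Finset.sum_add_distrib, Finset.sum_sub_distrib, Finset.sum_add_distrib,
        Finset.sum_const, Finset.card_univ, Fintype.card_fin]
      have e1 : ∑ j : Fin p, ηbar*(δi j)^2/c₀ = ηbar * (∑ j, (δi j)^2)/c₀ := by
        rw [← Finset.sum_div, ← Finset.mul_sum]
      have e2 : ∑ j : Fin p, ((k:ℝ)+1)*(η j)*‖(A j) (e ω k) - z j‖^2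
          = ((k:ℝ)+1) * ∑ j, (η j)*‖(A j) (e ω k) - z j‖^2 := by
        rw [Finset.mul_sum]
        exact Finset.sum_congr rfl fun j _ => by ring
      have e3 : ∑ j : Fin p, (k:ℝ)*(η j)*‖(A j) (e ω (k-1)) - z j‖^2
          = (k:ℝ) * ∑ j, (η j)*‖(A j) (e ω (k-1)) - z j‖^2 := by
        rw [Finset.mul_sum]
        exact Finset.sum_congr rfl fun j _ => by ring
      rw [e1, e2, e3, hC2, hδ2, nsmul_eq_mul]
      have hc₀ne : c₀ ≠ 0 := ne_of_gt hc₀pos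
      have hpne : (p:ℝ) ≠ 0 := ne_of_gt hpR
      field_simp
      ring
    have mono := avg_mono hp
      (f := fun ω => (∑ j : Fin p, ‖u (Function.update ω k j) (k+1)‖^2)/p)
      (g := fun ω => ‖u ω k‖^2 + (C2
            + ((-((k:ℝ)+1)) * ((∑ i, η i * ‖(A i) (e ω k) - z i‖^2)/p)
              + (k:ℝ) * ((∑ i, η i * ‖(A i) (e ω (k-1)) - z i‖^2)/p)))) point
    rw [expand]
    refine mono.trans_eq ?_
    rw [avg_add hp k (fun ω => ‖u ω k‖^2)
        (fun ω => C2 + ((-((k:ℝ)+1)) * ((∑ i, η i * ‖(A i) (e ω k) - z i‖^2)/p)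
          + (k:ℝ) * ((∑ i, η i * ‖(A i) (e ω (k-1)) - z i‖^2)/p)))]
    rw [avg_add hp k (fun _ => C2)
        (fun ω => (-((k:ℝ)+1)) * ((∑ i, η i * ‖(A i) (e ω k) - z i‖^2)/p)
          + (k:ℝ) * ((∑ i, η i * ‖(A i) (e ω (k-1)) - z i‖^2)/p))]
    rw [avg_add hp k
        (fun ω => (-((k:ℝ)+1)) * ((∑ i, η i * ‖(A i) (e ω k) - z i‖^2)/p))
        (fun ω => (k:ℝ) * ((∑ i, η i * ‖(A i) (e ω (k-1)) - z i‖^2)/p))]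
    rw [avg_const hp k, avg_const_mul hp k, avg_const_mul hp k]
  have stepB : ∀ k : ℕ, QQ (k+1) = PP k := by
    intro k
    simp only [hQQ, hPP, Nat.add_sub_cancel]
    apply avg_of_loc hp ?_ (k+1) (by omega)
    intro ω ω' h
    have h2 := eloc k ω ω' h
    simp only [h2]
  have PPnn : ∀ k, 0 ≤ PP k := by
    intro k
    apply avg_nonneg hp
    intro σ
    have hpos : (0:ℝ) < p := by exact_mod_cast hp
    have h0 : (0:ℝ) ≤ ∑ i, η i * ‖(A i) (e (pad hp k σ) k) - z i‖^2 :=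
      Finset.sum_nonneg fun i _ => mul_nonneg (hη i).1.le (by positivity)
    positivity
  have QQnn : ∀ k, 0 ≤ QQ k := by
    intro k
    apply avg_nonneg hp
    intro σ
    have hpos : (0:ℝ) < p := by exact_mod_cast hp
    have h0 : (0:ℝ) ≤ ∑ i, η i * ‖(A i) (e (pad hp k σ) (k-1)) - z i‖^2 :=
      Finset.sum_nonneg fun i _ => mul_nonneg (hη i).1.le (by positivity)
    positivity
  have stepC : ∀ k : ℕ, UU k + (k:ℝ) * QQ k ≤ (k:ℝ) * C2 := by
    intro k
    induction k with
    | zero =>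
      simp only [Nat.cast_zero, zero_mul, add_zero]
      have hU0 : UU 0 = 0 := by
        simp only [hUU]
        rw [avg_eq]
        have hz0 : ∀ σ : Fin 0 → Fin p, ‖u (pad hp 0 σ) 0‖^2 = 0 := by
          intro σ; simp [hu, e0]
        rw [Finset.sum_congr rfl fun σ _ => hz0 σ]
        simp
      rw [hU0]
    | succ k ih =>
      have hA := stepA k
      have hB := stepB k
      have hP := PPnn k
      push_cast
      rw [hB]
      linarith [ih, hA]
  have Ubound : ∀ k : ℕ, UU k ≤ (k:ℝ) * C2 := by
    intro k
    have h1 := stepC k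
    have h2 := mul_nonneg (show (0:ℝ) ≤ (k:ℝ) from Nat.cast_nonneg k) (QQnn k)
    linarith
  -- final assembly
  intro n
  have hpR : (0:ℝ) < p := by exact_mod_cast hp
  have hgoalfun : (fun ω => ‖xδ ω n - x ω n‖ ^ 2) = fun ω : ℕ → Fin p => ‖e ω n‖^2 := by
    funext ω; rw [he]
  rw [hgoalfun]
  have point : ∀ σ : Fin n → Fin p,
      ((n:ℝ)+1) * ‖e (pad hp n σ) n‖^2
        ≤ ∑ k ∈ Finset.range (n+1), ‖u (pad hp n σ) k‖^2 := by
    intro σ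
    set ω := pad hp n σ with hω
    have h1 : ((n:ℝ)+1) * ‖e ω n‖ ≤ ∑ k ∈ Finset.range (n+1), ‖u ω k‖ := by
      have := norm_sum_le (Finset.range (n+1)) (fun k => u ω k)
      rw [usum ω n, norm_smul, Real.norm_eq_abs, abs_of_pos (by positivity : (0:ℝ) < (n:ℝ)+1)] at this
      exact this
    have h2 : (∑ k ∈ Finset.range (n+1), ‖u ω k‖)^2
        ≤ (Finset.range (n+1)).card * ∑ k ∈ Finset.range (n+1), ‖u ω k‖^2 :=
      sq_sum_le_card_mul_sum_sq
    rw [Finset.card_range] at h2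
    push_cast at h2
    have hnn1 : (0:ℝ) ≤ ((n:ℝ)+1) * ‖e ω n‖ := by positivity
    have hnn2 : (0:ℝ) ≤ ∑ k ∈ Finset.range (n+1), ‖u ω k‖ :=
      Finset.sum_nonneg fun k _ => norm_nonneg _
    nlinarith [mul_le_mul h1 h1 hnn1 hnn2, sq_nonneg (‖e ω n‖)]
  have mono := avg_mono hp
    (f := fun ω => ((n:ℝ)+1) * ‖e ω n‖^2)
    (g := fun ω => ∑ k ∈ Finset.range (n+1), ‖u ω k‖^2) point
  rw [avg_const_mul hp n ((n:ℝ)+1) (fun ω => ‖e ω n‖^2)] at mono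
  rw [avg_sum hp n (Finset.range (n+1)) (fun k ω => ‖u ω k‖^2)] at mono
  have term_eq : ∀ k ∈ Finset.range (n+1), avg p hp n (fun ω => ‖u ω k‖^2) = UU k := by
    intro k hk
    rw [hUU]
    have hkn : k ≤ n := by
      have := Finset.mem_range.mp hk; omega
    apply avg_of_loc hp ?_ n hkn
    intro ω ω' h
    have h1 : e ω k = e ω' k := eloc k ω ω' h
    have h2 : e ω (k-1) = e ω' (k-1) := eloc (k-1) ω ω' (fun m hm => h m (by omega))
    simp only [hu, h1, h2]
  rw [Finset.sum_congr rfl term_eq] at mono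
  have sum_le : ∑ k ∈ Finset.range (n+1), UU k ≤ ((n:ℝ)+1) * ((n:ℝ) * C2) := by
    calc ∑ k ∈ Finset.range (n+1), UU k
        ≤ ∑ k ∈ Finset.range (n+1), (n:ℝ) * C2 := by
          apply Finset.sum_le_sum
          intro k hk
          refine (Ubound k).trans ?_
          have hkn : (k:ℝ) ≤ (n:ℝ) := by
            exact_mod_cast Nat.le_of_lt_succ (Finset.mem_range.mp hk)
          exact mul_le_mul_of_nonneg_right hkn hC2nn
      _ = ((n:ℝ)+1) * ((n:ℝ) * C2) := by
          rw [Finset.sum_const, Finset.card_range, nsmul_eq_mul]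
          push_cast
          ring
  have final : ((n:ℝ)+1) * avg p hp n (fun ω => ‖e ω n‖^2)
      ≤ ((n:ℝ)+1) * ((n:ℝ) * C2) := le_trans mono sum_le
  have hlast : avg p hp n (fun ω => ‖e ω n‖^2) ≤ (n:ℝ) * C2 :=
    le_of_mul_le_mul_left final (by positivity)
  refine hlast.trans_eq ?_
  rw [hC2]
  ring
end

section
/- Let (i_n)_{n≥0} be an arbitrary sequence of indices in {1, …, p}, let x† ∈ X satisfy A_i x† = y_i for all i, and let λ† = (λ_1†, …, λ_p†) ∈ Y be arbitrary. With (λ_n), (x_n), (u_n) and (r_n) as defined, for every integer n ≥ 0 one has u_{n+1,i} = u_{n,i} for i ≠ i_n, u_{n+1,i_n} = u_{n,i_n} − η_{i_n}(A_{i_n} x_n − y_{i_n}), and the identity r_{n+1} = r_n + η_{i_n} ‖A_{i_n} x_n − y_{i_n}‖² − 2 ⟨A_{i_n}^*(u_{n,i_n} − λ_{i_n}†), x_n − x†⟩. -/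
open scoped RealInnerProductSpace

/-- **Pathwise update identities for the dual quantities (from the proof of Lemma SHBM:lem1).**
Let `X`, `Y i` be real Hilbert spaces, `A i : X →L[ℝ] Y i`, `y i ∈ Y i`, `η i > 0`,
`(i_n)` an arbitrary sequence of indices, `x†` a solution of `A i x = y i` for all `i`,
and `λ† ∈ Y₁ × ⋯ × Y_p` arbitrary.  With `λ₋₁ = λ₀ := 0`,
`x n := x₀ + ∑ j (A j)* (λ n j)`, the recursion (SHB10) for `λ`, and
`u n := λ n + n • (λ n − λ (n−1))`, `r n := ∑ j (1/η j) ‖u n j − λ† j‖²`,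
one has for every `n ≥ 0`: `u (n+1) j = u n j` for `j ≠ i n`,
`u (n+1) (i n) = u n (i n) − η (i n) • (A (i n) (x n) − y (i n))`, and
`r (n+1) = r n + η (i n) ‖A (i n) (x n) − y (i n)‖²
  − 2 ⟪(A (i n))* (u n (i n) − λ† (i n)), x n − x†⟫`. -/
theorem stmt_4 {p : ℕ} {X : Type*} [NormedAddCommGroup X] [InnerProductSpace ℝ X]
    [CompleteSpace X]
    {Y : Fin p → Type*} [∀ i, NormedAddCommGroup (Y i)] [∀ i, InnerProductSpace ℝ (Y i)]
    [∀ i, CompleteSpace (Y i)]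
    (A : ∀ i, X →L[ℝ] Y i) (y : ∀ i, Y i)
    (η : Fin p → ℝ) (hη : ∀ i, 0 < η i)
    (i : ℕ → Fin p) (x₀ : X)
    (xdag : X) (hdag : ∀ i, (A i) xdag = y i)
    (lamdag : ∀ j, Y j)
    (lam : ℕ → ∀ j, Y j) (hlam0 : lam 0 = 0)
    (x : ℕ → X) (hxdef : ∀ n, x n = x₀ + ∑ k, (A k).adjoint (lam n k))
    (hlam : ∀ n : ℕ,
      (∀ j : Fin p, j ≠ i n → lam (n + 1) j =
        lam n j + ((n : ℝ) / ((n : ℝ) + 2)) • (lam n j - lam (n - 1) j)) ∧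
      lam (n + 1) (i n) =
        lam n (i n) + ((n : ℝ) / ((n : ℝ) + 2)) • (lam n (i n) - lam (n - 1) (i n))
          - (((n : ℝ) + 2)⁻¹ * η (i n)) • ((A (i n)) (x n) - y (i n)))
    (u : ℕ → ∀ j, Y j)
    (hu : ∀ n j, u n j = lam n j + (n : ℝ) • (lam n j - lam (n - 1) j))
    (r : ℕ → ℝ)
    (hr : ∀ n, r n = ∑ j, (η j)⁻¹ * ‖u n j - lamdag j‖ ^ 2) :
    ∀ n : ℕ,
      (∀ j : Fin p, j ≠ i n → u (n + 1) j = u n j) ∧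
      u (n + 1) (i n) = u n (i n) - η (i n) • ((A (i n)) (x n) - y (i n)) ∧
      r (n + 1) = r n + η (i n) * ‖(A (i n)) (x n) - y (i n)‖ ^ 2
        - 2 * ⟪(A (i n)).adjoint (u n (i n) - lamdag (i n)), x n - xdag⟫ := by

  intro n
  obtain ⟨h1, h2⟩ := hlam n
  have hn2 : ((n : ℝ) + 2) ≠ 0 := by positivity
  have key₁ : ∀ j : Fin p, j ≠ i n → u (n + 1) j = u n j := by
    intro j hj
    rw [hu, hu, h1 j hj]
    simp only [Nat.add_sub_cancel]
    push_cast
    match_scalars <;> field_simp <;> ring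
  have key₂ : u (n + 1) (i n) = u n (i n) - η (i n) • ((A (i n)) (x n) - y (i n)) := by
    rw [hu, hu, h2]
    simp only [Nat.add_sub_cancel]
    push_cast
    match_scalars <;> field_simp <;> ring
  refine ⟨key₁, key₂, ?_⟩
  set v := (A (i n)) (x n) - y (i n) with hv
  set w := u n (i n) - lamdag (i n) with hw
  have hinner : ⟪(A (i n)).adjoint w, x n - xdag⟫ = ⟪w, v⟫ := by
    rw [ContinuousLinearMap.adjoint_inner_left]
    congr 1
    rw [map_sub, hdag]
  have hη0 : η (i n) ≠ 0 := (hη (i n)).ne'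
  rw [hr, hr, hinner,
    Finset.sum_eq_add_sum_sdiff_singleton_of_mem (Finset.mem_univ (i n))
      (fun j => (η j)⁻¹ * ‖u (n + 1) j - lamdag j‖ ^ 2),
    Finset.sum_eq_add_sum_sdiff_singleton_of_mem (Finset.mem_univ (i n))
      (fun j => (η j)⁻¹ * ‖u n j - lamdag j‖ ^ 2)]
  have hsum : ∑ j ∈ Finset.univ \ {i n}, (η j)⁻¹ * ‖u (n + 1) j - lamdag j‖ ^ 2
      = ∑ j ∈ Finset.univ \ {i n}, (η j)⁻¹ * ‖u n j - lamdag j‖ ^ 2 := by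
    refine Finset.sum_congr rfl fun j hj => ?_
    have : j ≠ i n := by simpa using (Finset.mem_sdiff.mp hj).2
    rw [key₁ j this]
  rw [hsum]
  have hnorm : ‖u (n + 1) (i n) - lamdag (i n)‖ ^ 2
      = ‖w‖ ^ 2 - 2 * (η (i n) * ⟪w, v⟫) + (η (i n)) ^ 2 * ‖v‖ ^ 2 := by
    have : u (n + 1) (i n) - lamdag (i n) = w - η (i n) • v := by
      rw [key₂, hw]; abel
    rw [this, norm_sub_sq_real, real_inner_smul_right, norm_smul]
    simp [mul_pow, abs_of_pos (hη (i n))]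
  rw [hnorm]
  field_simp
  ring
end

section
/- Let (i_n)_{n≥0} be an arbitrary sequence of indices in {1, …, p} and let x† ∈ X satisfy A_i x† = y_i for all i. With (x_n) and (z_n) as defined, for every integer n ≥ 0 there holds ‖z_{n+1} − x†‖² ≤ ‖z_n − x†‖² + n η_{i_n} ‖A_{i_n} x_{n−1} − y_{i_n}‖² − (n + 2 − η_{i_n} ‖A_{i_n}‖²) η_{i_n} ‖A_{i_n} x_n − y_{i_n}‖². -/
open scoped RealInnerProductSpace

/-- **One-step estimate for the exact-data heavy-ball iteration (Lemma SHBM:lem2, pathwise).**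
Let `X`, `Y i` be real Hilbert spaces, `A i : X →L[ℝ] Y i`, `y i ∈ Y i`, `η i > 0`,
and `(i_n)` an arbitrary sequence of indices.  With `x₋₁ := x₀`, `z 0 := x₀`,
`z (n+1) := z n − η (i n) • (A (i n))* (A (i n) (x n) − y (i n))`,
`x (n+1) := ((n+1) • x n + z (n+1)) / (n+2)`, and `x†` a solution of `A i x = y i` for
all `i`, one has for every `n ≥ 0`:
`‖z (n+1) − x†‖² ≤ ‖z n − x†‖² + n η (i n) ‖A (i n) (x (n−1)) − y (i n)‖²
  − (n + 2 − η (i n) ‖A (i n)‖²) η (i n) ‖A (i n) (x n) − y (i n)‖²`. -/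
theorem stmt_6 {p : ℕ} {X : Type*} [NormedAddCommGroup X] [InnerProductSpace ℝ X]
    [CompleteSpace X]
    {Y : Fin p → Type*} [∀ i, NormedAddCommGroup (Y i)] [∀ i, InnerProductSpace ℝ (Y i)]
    [∀ i, CompleteSpace (Y i)]
    (A : ∀ i, X →L[ℝ] Y i) (y : ∀ i, Y i)
    (η : Fin p → ℝ) (hη : ∀ i, 0 < η i)
    (i : ℕ → Fin p) (x₀ : X) (x z : ℕ → X)
    (hx0 : x 0 = x₀) (hz0 : z 0 = x₀)
    (hz : ∀ n : ℕ, z (n + 1) =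
      z n - η (i n) • ((A (i n)).adjoint ((A (i n)) (x n) - y (i n))))
    (hx : ∀ n : ℕ, x (n + 1) = ((n : ℝ) + 2)⁻¹ • (((n : ℝ) + 1) • x n + z (n + 1)))
    (xdag : X) (hdag : ∀ i, (A i) xdag = y i) :
    ∀ n : ℕ,
      ‖z (n + 1) - xdag‖ ^ 2 ≤ ‖z n - xdag‖ ^ 2
        + (n : ℝ) * η (i n) * ‖(A (i n)) (x (n - 1)) - y (i n)‖ ^ 2
        - ((n : ℝ) + 2 - η (i n) * ‖A (i n)‖ ^ 2) * η (i n)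
            * ‖(A (i n)) (x n) - y (i n)‖ ^ 2 := by
  intro n
  set j := i n with hj
  set r : Y j := A j (x n) - y j with hr
  set r' : Y j := A j (x (n - 1)) - y j with hr'
  -- z n = (n+1) • x n - n • x (n-1)
  have hzn : z n = ((n : ℝ) + 1) • x n - (n : ℝ) • x (n - 1) := by
    cases n with
    | zero => simp [hz0, hx0]
    | succ m =>
      have h2 : ((m : ℝ) + 2) ≠ 0 := by positivity
      have key : ((m : ℝ) + 2) • x (m + 1) = ((m : ℝ) + 1) • x m + z (m + 1) := by
        rw [hx m, smul_inv_smul₀ h2]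
      have : z (m + 1) = ((m : ℝ) + 2) • x (m + 1) - ((m : ℝ) + 1) • x m := by
        rw [key]; abel
      rw [this]
      simp only [Nat.add_sub_cancel]
      push_cast
      module
  have hAa : A j (z n - xdag) = ((n : ℝ) + 1) • r - (n : ℝ) • r' := by
    rw [map_sub, hzn, map_sub, map_smul, map_smul, hdag, hr, hr']
    module
  have hexp : ‖z (n + 1) - xdag‖ ^ 2
      = ‖z n - xdag‖ ^ 2 - 2 * (η j * ⟪A j (z n - xdag), r⟫)
        + ‖η j • (A j).adjoint r‖ ^ 2 := by
    rw [hz n, sub_right_comm, norm_sub_sq_real, real_inner_smul_right,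
      ContinuousLinearMap.adjoint_inner_right]
  have hinner : ⟪A j (z n - xdag), r⟫
      = ((n : ℝ) + 1) * ‖r‖ ^ 2 - (n : ℝ) * ⟪r', r⟫ := by
    rw [hAa, inner_sub_left, real_inner_smul_left, real_inner_smul_left,
      real_inner_self_eq_norm_sq]
  have hs : ⟪r', r⟫ ≤ (‖r‖ ^ 2 + ‖r'‖ ^ 2) / 2 := by
    have h1 := real_inner_le_norm r' r
    nlinarith [sq_nonneg (‖r‖ - ‖r'‖), norm_nonneg r, norm_nonneg r']
  have hadj : ‖η j • (A j).adjoint r‖ ^ 2 ≤ η j ^ 2 * (‖A j‖ ^ 2 * ‖r‖ ^ 2) := by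
    have h1 : ‖(A j).adjoint r‖ ≤ ‖A j‖ * ‖r‖ := by
      calc ‖(A j).adjoint r‖ ≤ ‖(A j).adjoint‖ * ‖r‖ := (A j).adjoint.le_opNorm r
        _ = ‖A j‖ * ‖r‖ := by
          rw [ContinuousLinearMap.adjoint]
          simp [LinearIsometryEquiv.norm_map]
    have h2 : ‖η j • (A j).adjoint r‖ = |η j| * ‖(A j).adjoint r‖ := by
      rw [norm_smul, Real.norm_eq_abs]
    rw [h2, mul_pow, sq_abs]
    have h3 : ‖(A j).adjoint r‖ ^ 2 ≤ (‖A j‖ * ‖r‖) ^ 2 :=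
      pow_le_pow_left₀ (norm_nonneg _) h1 2
    nlinarith [mul_le_mul_of_nonneg_left h3 (sq_nonneg (η j))]
  have hn0 : (0 : ℝ) ≤ (n : ℝ) := Nat.cast_nonneg n
  have hηj : 0 < η j := hη j
  rw [hexp, hinner]
  nlinarith [mul_le_mul_of_nonneg_left hs (mul_nonneg hn0 hηj.le)]
end

section
/- Assume 0 < η_i < 1/‖A_i‖² for i = 1, …, p and let x† be the x₀-minimal norm solution of A x = y. Then for all integers n ≥ 0 there holds E[‖z_{n+1} − x†‖² + ((n+1)/p) Σ_{i=1}^p η_i ‖A_i x_n − y_i‖²] ≤ E[‖z_n − x†‖² + (n/p) Σ_{i=1}^p η_i ‖A_i x_{n−1} − y_i‖²] − (c₀/p) Σ_{i=1}^p η_i E[‖A_i x_n − y_i‖²]. -/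
open scoped RealInnerProductSpace

lemma key_ineq {X Y : Type*} [NormedAddCommGroup X] [InnerProductSpace ℝ X] [CompleteSpace X]
    [NormedAddCommGroup Y] [InnerProductSpace ℝ Y] [CompleteSpace Y]
    (A : X →L[ℝ] Y) (η c₀ N : ℝ) (hη : 0 ≤ η) (hN : 0 ≤ N)
    (hA : η * ‖A‖ ^ 2 ≤ 1 - c₀) (u xd : X) (r s : Y)
    (hr : A u - A xd = (N + 1) • r - N • s) :
    ‖u - η • A.adjoint r - xd‖ ^ 2 ≤
      ‖u - xd‖ ^ 2 - (N + 1 + c₀) * η * ‖r‖ ^ 2 + N * η * ‖s‖ ^ 2 := by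
  have e0 : u - η • A.adjoint r - xd = (u - xd) - η • A.adjoint r := by abel
  rw [e0, norm_sub_sq_real]
  have e1 : ⟪u - xd, η • A.adjoint r⟫ = η * ((N + 1) * ‖r‖ ^ 2 - N * ⟪r, s⟫) := by
    rw [real_inner_smul_right, real_inner_comm, ContinuousLinearMap.adjoint_inner_left]
    rw [show A (u - xd) = (N + 1) • r - N • s by rw [map_sub]; exact hr] at *
    rw [inner_sub_right, real_inner_smul_right, real_inner_smul_right, real_inner_self_eq_norm_sq]
  have e2 : ‖η • A.adjoint r‖ ^ 2 ≤ η * (1 - c₀) * ‖r‖ ^ 2 := by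
    have hnorm : ‖A.adjoint r‖ ≤ ‖A‖ * ‖r‖ := by
      calc ‖A.adjoint r‖ ≤ ‖A.adjoint‖ * ‖r‖ := A.adjoint.le_opNorm r
      _ = ‖A‖ * ‖r‖ := by
        rw [(ContinuousLinearMap.adjoint : (X →L[ℝ] Y) ≃ₗᵢ⋆[ℝ] (Y →L[ℝ] X)).norm_map A]
    have h2 : ‖η • A.adjoint r‖ ^ 2 = η ^ 2 * ‖A.adjoint r‖ ^ 2 := by
      rw [norm_smul]; simp [mul_pow, abs_of_nonneg hη]
    have h3 : ‖A.adjoint r‖ ^ 2 ≤ (‖A‖ * ‖r‖) ^ 2 := by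
      have := mul_le_mul hnorm hnorm (norm_nonneg _) (by positivity : (0:ℝ) ≤ ‖A‖ * ‖r‖)
      nlinarith
    nlinarith [mul_le_mul_of_nonneg_left h3 (sq_nonneg η),
      mul_le_mul_of_nonneg_left hA (mul_nonneg hη (sq_nonneg ‖r‖))]
  have e3 : 2 * ⟪r, s⟫ ≤ ‖r‖ ^ 2 + ‖s‖ ^ 2 := by
    nlinarith [real_inner_le_norm r s, sq_nonneg (‖r‖ - ‖s‖)]
  nlinarith [sq_nonneg (‖r‖), mul_nonneg hN hη]

def emb (p : ℕ) (hp : 0 < p) (m : ℕ) (σ : Fin m → Fin p) : ℕ → Fin p :=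
  fun k => if h : k < m then σ ⟨k, h⟩ else ⟨0, hp⟩

lemma emb_lt (p : ℕ) (hp : 0 < p) {m k : ℕ} (σ : Fin m → Fin p) (hk : k < m) :
    emb p hp m σ k = σ ⟨k, hk⟩ := dif_pos hk

/-- **Lemma SHBM:lem2.**  Assume `0 < η i < 1/‖A i‖²` and let `x†` be the `x₀`-minimal
norm solution of `A x = y`.  With the exact-data iterates `(x, z)` in moving-average
form and `c₀ = min_i (1 − η i ‖A i‖²)`, for all `n ≥ 0`:
`E[‖z (n+1) − x†‖² + ((n+1)/p) ∑_i η i ‖A i (x n) − y i‖²]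
  ≤ E[‖z n − x†‖² + (n/p) ∑_i η i ‖A i (x (n−1)) − y i‖²]
    − (c₀/p) ∑_i η i E[‖A i (x n) − y i‖²]`. -/
theorem stmt_7 {p : ℕ} (hp : 0 < p) {X : Type*} [NormedAddCommGroup X]
    [InnerProductSpace ℝ X] [CompleteSpace X]
    {Y : Fin p → Type*} [∀ i, NormedAddCommGroup (Y i)] [∀ i, InnerProductSpace ℝ (Y i)]
    [∀ i, CompleteSpace (Y i)]
    (A : ∀ i, X →L[ℝ] Y i) (y : ∀ i, Y i)
    (η : Fin p → ℝ) (hη : ∀ i, 0 < η i ∧ η i < 1 / ‖A i‖ ^ 2)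
    (c₀ : ℝ) (hc₀ : IsLeast (Set.range fun i => 1 - η i * ‖A i‖ ^ 2) c₀)
    (x₀ xdag : X)
    (hdag : ∀ i, (A i) xdag = y i)
    (hmin : ∀ x' : X, (∀ i, (A i) x' = y i) → ‖xdag - x₀‖ ≤ ‖x' - x₀‖)
    (x z : (ℕ → Fin p) → ℕ → X)
    (hx0 : ∀ ω, x ω 0 = x₀) (hz0 : ∀ ω, z ω 0 = x₀)
    (hz : ∀ ω, ∀ n : ℕ, z ω (n + 1) =
      z ω n - η (ω n) • ((A (ω n)).adjoint ((A (ω n)) (x ω n) - y (ω n))))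
    (hx : ∀ ω, ∀ n : ℕ, x ω (n + 1) =
      ((n : ℝ) + 2)⁻¹ • (((n : ℝ) + 1) • x ω n + z ω (n + 1))) :
    ∀ n : ℕ,
      avg p hp (n + 1) (fun ω => ‖z ω (n + 1) - xdag‖ ^ 2
          + (((n : ℝ) + 1) / p) * ∑ i, η i * ‖(A i) (x ω n) - y i‖ ^ 2)
        ≤ avg p hp n (fun ω => ‖z ω n - xdag‖ ^ 2
            + ((n : ℝ) / p) * ∑ i, η i * ‖(A i) (x ω (n - 1)) - y i‖ ^ 2)
          - (c₀ / p) * ∑ i, η i * avg p hp n (fun ω => ‖(A i) (x ω n) - y i‖ ^ 2) := by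
  intro n
  have hpR : (0:ℝ) < (p:ℝ) := by exact_mod_cast hp
  have hcle : ∀ i, η i * ‖A i‖ ^ 2 ≤ 1 - c₀ := fun i => by
    have h : c₀ ≤ 1 - η i * ‖A i‖ ^ 2 := hc₀.2 ⟨i, rfl⟩
    linarith
  have hηpos : ∀ i, 0 ≤ η i := fun i => (hη i).1.le
  have avg_eq : ∀ (m : ℕ) (f : (ℕ → Fin p) → ℝ),
      avg p hp m f = (∑ σ : Fin m → Fin p, f (emb p hp m σ)) / (p:ℝ) ^ m := fun m f => rfl
  -- x, z at time m are determined by the first m coordinates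
  have det : ∀ m : ℕ, ∀ ω ω' : ℕ → Fin p, (∀ k, k < m → ω k = ω' k) →
      z ω m = z ω' m ∧ x ω m = x ω' m := by
    intro m
    induction m with
    | zero => intro ω ω' _; rw [hz0, hz0, hx0, hx0]; exact ⟨rfl, rfl⟩
    | succ m ih =>
      intro ω ω' hag
      obtain ⟨hzm, hxm⟩ := ih ω ω' fun k hk => hag k (hk.trans m.lt_succ_self)
      have hωm : ω m = ω' m := hag m m.lt_succ_self
      have hzs : z ω (m+1) = z ω' (m+1) := by rw [hz, hz, hzm, hxm, hωm]
      exact ⟨hzs, by rw [hx, hx, hxm, hzs]⟩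
  -- z in terms of x
  have zrel : ∀ ω : ℕ → Fin p, ∀ m : ℕ,
      z ω m = ((m:ℝ)+1) • x ω m - (m:ℝ) • x ω (m-1) := by
    intro ω m
    cases m with
    | zero => simp [hz0, hx0]
    | succ m =>
      have h2 : ((m:ℝ)+2) ≠ 0 := by positivity
      have hxe : ((m:ℝ)+2) • x ω (m+1) = ((m:ℝ)+1) • x ω m + z ω (m+1) := by
        rw [hx ω m, smul_inv_smul₀ h2]
      have hzz : z ω (m+1) = ((m:ℝ)+2) • x ω (m+1) - ((m:ℝ)+1) • x ω m := by
        rw [hxe]; abel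
      have e : ((m+1:ℕ):ℝ) + 1 = (m:ℝ)+2 := by push_cast; ring
      have e' : ((m+1:ℕ):ℝ) = (m:ℝ)+1 := by push_cast; ring
      rw [hzz, Nat.add_sub_cancel, e, e']
  -- agreement of embedded paths
  have agree : ∀ (τ : Fin n → Fin p) (j : Fin p) (k : ℕ), k < n →
      emb p hp (n+1) (Fin.snoc τ j) k = emb p hp n τ k := by
    intro τ j k hk
    rw [emb_lt p hp _ (hk.trans n.lt_succ_self), emb_lt p hp _ hk]
    have hc : (⟨k, hk.trans n.lt_succ_self⟩ : Fin (n+1)) = Fin.castSucc ⟨k, hk⟩ := rfl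
    rw [hc, Fin.snoc_castSucc]
  have embtop : ∀ (τ : Fin n → Fin p) (j : Fin p), emb p hp (n+1) (Fin.snoc τ j) n = j := by
    intro τ j
    rw [emb_lt p hp _ n.lt_succ_self]
    have hc : (⟨n, n.lt_succ_self⟩ : Fin (n+1)) = Fin.last n := rfl
    rw [hc, Fin.snoc_last]
  -- the per-τ inequality
  have keyτ : ∀ τ : Fin n → Fin p,
      ∑ j : Fin p, (‖z (emb p hp (n+1) (Fin.snoc τ j)) (n+1) - xdag‖ ^ 2
          + (((n:ℝ)+1)/p) * ∑ i, η i * ‖(A i) (x (emb p hp (n+1) (Fin.snoc τ j)) n) - y i‖ ^ 2)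
      ≤ (p:ℝ) * ((‖z (emb p hp n τ) n - xdag‖ ^ 2
            + ((n:ℝ)/p) * ∑ i, η i * ‖(A i) (x (emb p hp n τ) (n-1)) - y i‖ ^ 2)
          - (c₀/p) * ∑ i, η i * ‖(A i) (x (emb p hp n τ) n) - y i‖ ^ 2) := by
    intro τ
    have hxn : ∀ j : Fin p, x (emb p hp (n+1) (Fin.snoc τ j)) n = x (emb p hp n τ) n :=
      fun j => (det n _ _ (agree τ j)).2
    have hzn : ∀ j : Fin p, z (emb p hp (n+1) (Fin.snoc τ j)) n = z (emb p hp n τ) n :=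
      fun j => (det n _ _ (agree τ j)).1
    have hznext : ∀ j : Fin p, z (emb p hp (n+1) (Fin.snoc τ j)) (n+1)
        = z (emb p hp n τ) n - η j • ((A j).adjoint ((A j) (x (emb p hp n τ) n) - y j)) := by
      intro j
      rw [hz _ n, embtop τ j, hxn j, hzn j]
    have hr : ∀ j : Fin p, (A j) (z (emb p hp n τ) n) - (A j) xdag
        = ((n:ℝ) + 1) • ((A j) (x (emb p hp n τ) n) - y j)
          - (n:ℝ) • ((A j) (x (emb p hp n τ) (n-1)) - y j) := by
      intro j
      rw [hdag j, zrel (emb p hp n τ) n, map_sub, map_smul, map_smul]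
      module
    have hkey : ∀ j : Fin p,
        ‖z (emb p hp (n+1) (Fin.snoc τ j)) (n+1) - xdag‖ ^ 2
          ≤ ‖z (emb p hp n τ) n - xdag‖ ^ 2
            - ((n:ℝ) + 1 + c₀) * η j * ‖(A j) (x (emb p hp n τ) n) - y j‖ ^ 2
            + (n:ℝ) * η j * ‖(A j) (x (emb p hp n τ) (n-1)) - y j‖ ^ 2 := by
      intro j
      rw [hznext j]
      exact key_ineq (A j) (η j) c₀ (n:ℝ) (hηpos j) (Nat.cast_nonneg n) (hcle j)
        (z (emb p hp n τ) n) xdag _ _ (hr j)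
    calc ∑ j : Fin p, (‖z (emb p hp (n+1) (Fin.snoc τ j)) (n+1) - xdag‖ ^ 2
          + (((n:ℝ)+1)/p) * ∑ i, η i * ‖(A i) (x (emb p hp (n+1) (Fin.snoc τ j)) n) - y i‖ ^ 2)
        ≤ ∑ j : Fin p, ((‖z (emb p hp n τ) n - xdag‖ ^ 2
            - ((n:ℝ) + 1 + c₀) * (η j * ‖(A j) (x (emb p hp n τ) n) - y j‖ ^ 2)
            + (n:ℝ) * (η j * ‖(A j) (x (emb p hp n τ) (n-1)) - y j‖ ^ 2))
          + (((n:ℝ)+1)/p) * ∑ i, η i * ‖(A i) (x (emb p hp n τ) n) - y i‖ ^ 2) := by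
          refine Finset.sum_le_sum fun j _ => ?_
          rw [hxn j]
          have := hkey j
          gcongr
          linarith [hkey j]
      _ = (p:ℝ) * ((‖z (emb p hp n τ) n - xdag‖ ^ 2
            + ((n:ℝ)/p) * ∑ i, η i * ‖(A i) (x (emb p hp n τ) (n-1)) - y i‖ ^ 2)
          - (c₀/p) * ∑ i, η i * ‖(A i) (x (emb p hp n τ) n) - y i‖ ^ 2) := by
          rw [Finset.sum_add_distrib, Finset.sum_add_distrib, Finset.sum_sub_distrib,
            Finset.sum_const, Finset.card_univ, Fintype.card_fin, ← Finset.mul_sum,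
            ← Finset.mul_sum, Finset.sum_const, Finset.card_univ, Fintype.card_fin,
            nsmul_eq_mul, nsmul_eq_mul]
          field_simp
          ring
  -- decompose the (n+1)-fold sum via snoc
  let eqv : ((Fin n → Fin p) × Fin p) ≃ (Fin (n+1) → Fin p) :=
    { toFun := fun q => Fin.snoc q.1 q.2
      invFun := fun σ => (fun i => σ i.castSucc, σ (Fin.last n))
      left_inv := by rintro ⟨τ, j⟩; simp
      right_inv := fun σ => Fin.snoc_init_self σ }
  have esum : ∑ σ : Fin (n+1) → Fin p, (‖z (emb p hp (n+1) σ) (n+1) - xdag‖ ^ 2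
        + (((n:ℝ)+1)/p) * ∑ i, η i * ‖(A i) (x (emb p hp (n+1) σ) n) - y i‖ ^ 2)
      = ∑ τ : Fin n → Fin p, ∑ j : Fin p,
          (‖z (emb p hp (n+1) (Fin.snoc τ j)) (n+1) - xdag‖ ^ 2
            + (((n:ℝ)+1)/p) * ∑ i, η i * ‖(A i) (x (emb p hp (n+1) (Fin.snoc τ j)) n) - y i‖ ^ 2) := by
    rw [← Equiv.sum_comp eqv (fun σ => ‖z (emb p hp (n+1) σ) (n+1) - xdag‖ ^ 2
        + (((n:ℝ)+1)/p) * ∑ i, η i * ‖(A i) (x (emb p hp (n+1) σ) n) - y i‖ ^ 2),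
      Fintype.sum_prod_type]
    rfl
  have swap : ∑ τ : Fin n → Fin p, ∑ i, η i * ‖(A i) (x (emb p hp n τ) n) - y i‖ ^ 2
      = ∑ i, η i * ∑ τ : Fin n → Fin p, ‖(A i) (x (emb p hp n τ) n) - y i‖ ^ 2 := by
    rw [Finset.sum_comm]
    exact Finset.sum_congr rfl fun i _ => (Finset.mul_sum _ _ _).symm
  simp only [avg_eq]
  rw [esum]
  have hpow : (0:ℝ) < (p:ℝ) ^ (n+1) := by positivity
  calc (∑ τ : Fin n → Fin p, ∑ j : Fin p,
          (‖z (emb p hp (n+1) (Fin.snoc τ j)) (n+1) - xdag‖ ^ 2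
            + (((n:ℝ)+1)/p) * ∑ i, η i * ‖(A i) (x (emb p hp (n+1) (Fin.snoc τ j)) n) - y i‖ ^ 2))
        / (p:ℝ) ^ (n+1)
      ≤ (∑ τ : Fin n → Fin p, (p:ℝ) * ((‖z (emb p hp n τ) n - xdag‖ ^ 2
            + ((n:ℝ)/p) * ∑ i, η i * ‖(A i) (x (emb p hp n τ) (n-1)) - y i‖ ^ 2)
          - (c₀/p) * ∑ i, η i * ‖(A i) (x (emb p hp n τ) n) - y i‖ ^ 2)) / (p:ℝ) ^ (n+1) := by
        gcongr with τ _
        exact keyτ τ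
    _ = (∑ τ : Fin n → Fin p, (‖z (emb p hp n τ) n - xdag‖ ^ 2
            + ((n:ℝ)/p) * ∑ i, η i * ‖(A i) (x (emb p hp n τ) (n-1)) - y i‖ ^ 2)) / (p:ℝ) ^ n
          - (c₀/p) * ∑ i, η i *
            ((∑ τ : Fin n → Fin p, ‖(A i) (x (emb p hp n τ) n) - y i‖ ^ 2) / (p:ℝ) ^ n) := by
        rw [← Finset.mul_sum, Finset.sum_sub_distrib, ← Finset.mul_sum, swap, pow_succ]
        have hT : ∑ i, η i * ((∑ τ : Fin n → Fin p, ‖(A i) (x (emb p hp n τ) n) - y i‖ ^ 2)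
              / (p:ℝ) ^ n)
            = (∑ i, η i * ∑ τ : Fin n → Fin p, ‖(A i) (x (emb p hp n τ) n) - y i‖ ^ 2)
              / (p:ℝ) ^ n := by
          rw [Finset.sum_div]
          exact Finset.sum_congr rfl fun i _ => (mul_div_assoc _ _ _).symm
        rw [hT]
        field_simp
end

section
/- Assume 0 < η_i < 1/‖A_i‖² for i = 1, …, p and that the x₀-minimal norm solution x† satisfies the source condition x† − x₀ = A^* λ† for some λ† = (λ_1†, …, λ_p†) ∈ Y. Then for all integers n ≥ 0 there holds E[‖x_n − x†‖²] ≤ p M₀ / (c₀ (n+1)), where M₀ := ‖x₀ − x†‖² + c₀ Σ_{i=1}^p (1/η_i) ‖λ_i†‖². -/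
namespace SHBMaux

open Finset RealInnerProductSpace

variable {p : ℕ}

def pad (hp : 0 < p) (m : ℕ) (σ : Fin m → Fin p) : ℕ → Fin p :=
  fun k => if h : k < m then σ ⟨k, h⟩ else ⟨0, hp⟩

lemma avg_eq (hp : 0 < p) (m : ℕ) (f : (ℕ → Fin p) → ℝ) :
    avg p hp m f = (∑ σ : Fin m → Fin p, f (pad hp m σ)) / (p : ℝ) ^ m := rfl

lemma pad_snoc (hp : 0 < p) (m : ℕ) (σ : Fin m → Fin p) (i : Fin p) :
    pad hp (m + 1) (Fin.snoc σ i) = Function.update (pad hp m σ) m i := by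
  funext k
  rcases lt_trichotomy k m with h | h | h
  · rw [Function.update_of_ne (by omega)]
    simp only [pad, dif_pos (show k < m + 1 by omega), dif_pos h]
    exact Fin.snoc_castSucc (α := fun _ => Fin p) (p := σ) (x := i) (i := ⟨k, h⟩)
  · subst h
    simp only [pad, dif_pos (Nat.lt_succ_self k), Function.update_self]
    exact Fin.snoc_last (α := fun _ => Fin p) (p := σ) (x := i)
  · rw [Function.update_of_ne (by omega)]
    simp only [pad, dif_neg (show ¬ k < m + 1 by omega), dif_neg (show ¬ k < m by omega)]

lemma sum_succ (hp : 0 < p) (m : ℕ) (f : (ℕ → Fin p) → ℝ) :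
    ∑ σ : Fin (m + 1) → Fin p, f (pad hp (m + 1) σ)
      = ∑ σ : Fin m → Fin p, ∑ i : Fin p, f (Function.update (pad hp m σ) m i) := by
  rw [← Equiv.sum_comp (Fin.snocEquiv (fun _ => Fin p)) (fun σ => f (pad hp (m + 1) σ))]
  rw [Fintype.sum_prod_type]
  rw [Finset.sum_comm]
  refine Finset.sum_congr rfl fun σ _ => Finset.sum_congr rfl fun i _ => ?_
  have : (Fin.snocEquiv (fun _ => Fin p)) (i, σ) = Fin.snoc σ i := rfl
  rw [this, pad_snoc]


lemma avg_succ_le (hp : 0 < p) (m : ℕ) (f g : (ℕ → Fin p) → ℝ)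
    (h : ∀ ω, ∑ i : Fin p, f (Function.update ω m i) ≤ (p : ℝ) * g ω) :
    avg p hp (m + 1) f ≤ avg p hp m g := by
  rw [avg_eq, avg_eq, sum_succ]
  have hp0 : (0 : ℝ) < (p : ℝ) := by exact_mod_cast hp
  have hpm : (0 : ℝ) < (p : ℝ) ^ m := by positivity
  have h1 : ∑ σ : Fin m → Fin p, ∑ i : Fin p, f (Function.update (pad hp m σ) m i)
      ≤ ∑ σ : Fin m → Fin p, (p : ℝ) * g (pad hp m σ) :=
    Finset.sum_le_sum fun σ _ => h (pad hp m σ)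
  calc (∑ σ : Fin m → Fin p, ∑ i : Fin p, f (Function.update (pad hp m σ) m i)) / (p : ℝ) ^ (m + 1)
      ≤ (∑ σ : Fin m → Fin p, (p : ℝ) * g (pad hp m σ)) / (p : ℝ) ^ (m + 1) := by
        apply div_le_div_of_nonneg_right h1 (by positivity) |>.trans_eq rfl
    _ = (∑ σ : Fin m → Fin p, g (pad hp m σ)) / (p : ℝ) ^ m := by
        rw [← Finset.mul_sum, pow_succ]
        field_simp

lemma avg_reduce (hp : 0 < p) (m : ℕ) (f : (ℕ → Fin p) → ℝ)
    (h : ∀ ω i, f (Function.update ω m i) = f ω) :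
    avg p hp (m + 1) f = avg p hp m f := by
  rw [avg_eq, avg_eq, sum_succ]
  have hp0 : (0 : ℝ) < (p : ℝ) := by exact_mod_cast hp
  have : ∀ σ : Fin m → Fin p, ∑ i : Fin p, f (Function.update (pad hp m σ) m i)
      = (p : ℝ) * f (pad hp m σ) := by
    intro σ
    rw [Finset.sum_congr rfl fun i _ => h (pad hp m σ) i]
    simp [Finset.sum_const, mul_comm]
  rw [Finset.sum_congr rfl fun σ _ => this σ, ← Finset.mul_sum, pow_succ]
  field_simp

lemma avg_mono (hp : 0 < p) (m : ℕ) (f g : (ℕ → Fin p) → ℝ) (h : ∀ ω, f ω ≤ g ω) :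
    avg p hp m f ≤ avg p hp m g := by
  rw [avg_eq, avg_eq]
  exact div_le_div_of_nonneg_right (Finset.sum_le_sum fun σ _ => h _) (by positivity)
    |>.trans_eq rfl

lemma avg_const_mul (hp : 0 < p) (m : ℕ) (c : ℝ) (f : (ℕ → Fin p) → ℝ) :
    avg p hp m (fun ω => c * f ω) = c * avg p hp m f := by
  rw [avg_eq, avg_eq, ← Finset.mul_sum, mul_div_assoc]

lemma avg_zero_level (hp : 0 < p) (f : (ℕ → Fin p) → ℝ) :
    avg p hp 0 f = f (fun _ => ⟨0, hp⟩) := by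
  rw [avg_eq]
  have hparity : pad hp 0 (default : Fin 0 → Fin p) = fun _ => ⟨0, hp⟩ := by
    funext k; simp [pad]
  simp only [pow_zero, div_one, Finset.univ_unique, Finset.sum_singleton, hparity]


section main

variable {X : Type*} [NormedAddCommGroup X] [InnerProductSpace ℝ X] [CompleteSpace X]
  {Y : Fin p → Type*} [∀ i, NormedAddCommGroup (Y i)] [∀ i, InnerProductSpace ℝ (Y i)]
  [∀ i, CompleteSpace (Y i)]

/-- The momentum-free reformulation: `w n = (n+1) x_n - n x_{n-1} - x†` written as
`(x_n - x†) + n • (x_n - x_{n-1})`. -/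
noncomputable def wseq (xdag : X) (x : (ℕ → Fin p) → ℕ → X) (ω : ℕ → Fin p) (n : ℕ) : X :=
  (x ω n - xdag) + (n : ℝ) • (x ω n - x ω (n - 1))

/-- The dual sequence. -/
noncomputable def mu (A : ∀ i, X →L[ℝ] Y i) (y : ∀ i, Y i) (η : Fin p → ℝ)
    (x : (ℕ → Fin p) → ℕ → X) (ω : ℕ → Fin p) : ℕ → ∀ i, Y i
  | 0 => 0
  | n + 1 => fun i =>
      mu A y η x ω n i - if i = ω n then η i • (A i (x ω n) - y i) else 0

variable (A : ∀ i, X →L[ℝ] Y i) (y : ∀ i, Y i) (η : Fin p → ℝ) (lamdag : ∀ j, Y j)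
  (x₀ xdag : X) (x : (ℕ → Fin p) → ℕ → X)

/-- Weighted dual potential. -/
noncomputable def Phi (ω : ℕ → Fin p) (n : ℕ) : ℝ :=
  ∑ i, (η i)⁻¹ * ‖mu A y η x ω n i - lamdag i‖ ^ 2

/-- Weighted residual. -/
noncomputable def Rres (ω : ℕ → Fin p) (n : ℕ) : ℝ :=
  ∑ i, η i * ‖A i (x ω n - xdag)‖ ^ 2

/-- Lyapunov integrand. -/
noncomputable def Lyap (c₀ : ℝ) (ω : ℕ → Fin p) (n : ℕ) : ℝ :=
  p * Phi A y η lamdag x ω n + ((p : ℝ) / c₀) * ‖wseq xdag x ω n‖ ^ 2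
    + (n : ℝ) * ‖x ω (n - 1) - xdag‖ ^ 2 + ((n : ℝ) / c₀) * Rres A η xdag x ω (n - 1)

variable {A y η lamdag x₀ xdag x}

lemma two_inner_ge {E : Type*} [NormedAddCommGroup E] [InnerProductSpace ℝ E]
    (a b : E) (ν : ℝ) (hν : 0 ≤ ν) :
    (ν + 2) * ‖a‖ ^ 2 - ν * ‖b‖ ^ 2 ≤ 2 * ⟪a + ν • (a - b), a⟫ := by
  have h1 : ⟪a + ν • (a - b), a⟫ = ‖a‖ ^ 2 + ν * (‖a‖ ^ 2 - ⟪b, a⟫) := by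
    simp only [inner_add_left, real_inner_smul_left, inner_sub_left,
      real_inner_self_eq_norm_sq]
  have h2 := norm_sub_sq_real a b
  have h3 : (0 : ℝ) ≤ ‖a - b‖ ^ 2 := sq_nonneg _
  have h4 : ⟪b, a⟫ = ⟪a, b⟫ := real_inner_comm _ _
  nlinarith [mul_nonneg hν h3]

lemma adj_apply_norm_le {E F : Type*} [NormedAddCommGroup E] [InnerProductSpace ℝ E]
    [CompleteSpace E] [NormedAddCommGroup F] [InnerProductSpace ℝ F] [CompleteSpace F]
    (B : E →L[ℝ] F) (v : F) : ‖B.adjoint v‖ ≤ ‖B‖ * ‖v‖ := by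
  have h := (B.adjoint).le_opNorm v
  rwa [ContinuousLinearMap.adjoint.norm_map B] at h


section rec

variable (hx0 : ∀ ω, x ω 0 = x₀)
  (hx : ∀ ω, ∀ n : ℕ, x ω (n + 1) = x ω n
      - (((n : ℝ) + 2)⁻¹ * η (ω n)) • ((A (ω n)).adjoint ((A (ω n)) (x ω n) - y (ω n)))
      + ((n : ℝ) / ((n : ℝ) + 2)) • (x ω n - x ω (n - 1)))
  (hdag : ∀ i, (A i) xdag = y i)

include hx0 hx in
lemma x_dep : ∀ n (ω ω' : ℕ → Fin p), (∀ k, k < n → ω k = ω' k) → x ω n = x ω' n := by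
  intro n
  induction n using Nat.strong_induction_on with
  | _ n ih =>
    match n with
    | 0 => intro ω ω' _; rw [hx0, hx0]
    | Nat.succ m =>
      intro ω ω' h
      rw [hx, hx]
      have h1 : x ω m = x ω' m := ih m (by omega) ω ω' (fun k hk => h k (by omega))
      have h2 : x ω (m - 1) = x ω' (m - 1) := ih (m - 1) (by omega) ω ω' (fun k hk => h k (by omega))
      have h3 : ω m = ω' m := h m (by omega)
      rw [h1, h2, h3]

include hx0 hx in
lemma mu_dep : ∀ n (ω ω' : ℕ → Fin p), (∀ k, k < n → ω k = ω' k) →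
    mu A y η x ω n = mu A y η x ω' n := by
  intro n
  induction n with
  | zero => intro ω ω' _; rfl
  | succ m ih =>
    intro ω ω' h
    funext i
    show mu A y η x ω m i - _ = mu A y η x ω' m i - _
    rw [ih ω ω' (fun k hk => h k (by omega)), x_dep hx0 hx m ω ω' (fun k hk => h k (by omega)),
      h m (by omega)]

include hx hdag in
lemma w_rec (ω : ℕ → Fin p) (n : ℕ) :
    wseq xdag x ω (n + 1)
      = wseq xdag x ω n - η (ω n) • ((A (ω n)).adjoint ((A (ω n)) (x ω n - xdag))) := by
  have hy : (A (ω n)) (x ω n) - y (ω n) = (A (ω n)) (x ω n - xdag) := by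
    rw [map_sub, hdag]
  have hne : ((n : ℝ) + 2) ≠ 0 := by positivity
  rw [wseq, wseq, hx ω n, hy]
  simp only [Nat.add_sub_cancel]
  push_cast
  match_scalars <;> field_simp <;> ring

include hx0 hx hdag in
lemma w_eq_sum (ω : ℕ → Fin p) : ∀ n,
    wseq xdag x ω n = (x₀ - xdag) + ∑ i, (A i).adjoint (mu A y η x ω n i) := by
  intro n
  induction n with
  | zero =>
    rw [wseq, hx0]
    simp [mu]
  | succ n ih =>
    rw [w_rec hx hdag, ih]
    have hterm : ∀ i : Fin p, (A i).adjoint (mu A y η x ω (n + 1) i)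
        = (A i).adjoint (mu A y η x ω n i)
          - (if i = ω n then (A i).adjoint (η i • ((A i) (x ω n) - y i)) else 0) := by
      intro i
      show (A i).adjoint (mu A y η x ω n i - _) = _
      rw [map_sub]
      congr 1
      split <;> simp
    rw [Finset.sum_congr rfl fun i _ => hterm i, Finset.sum_sub_distrib,
      Finset.sum_ite_eq' Finset.univ (ω n)]
    simp only [Finset.mem_univ, if_true, map_smul]
    have hy : (A (ω n)) (x ω n) - y (ω n) = (A (ω n)) (x ω n - xdag) := by
      rw [map_sub, hdag]
    rw [hy]
    abel

variable (hsource : xdag - x₀ = ∑ j, (A j).adjoint (lamdag j))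

include hx0 hx hdag hsource in
lemma w_eq_nu (ω : ℕ → Fin p) (n : ℕ) :
    wseq xdag x ω n = ∑ i, (A i).adjoint (mu A y η x ω n i - lamdag i) := by
  have h := w_eq_sum hx0 hx hdag ω n
  calc wseq xdag x ω n
      = (x₀ - xdag) + ∑ i, (A i).adjoint (mu A y η x ω n i) := h
    _ = ∑ i, ((A i).adjoint (mu A y η x ω n i) - (A i).adjoint (lamdag i)) := by
        rw [Finset.sum_sub_distrib, ← hsource]
        abel
    _ = ∑ i, (A i).adjoint (mu A y η x ω n i - lamdag i) := by
        exact Finset.sum_congr rfl fun i _ => (map_sub _ _ _).symm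

include hx0 hx hdag hsource in
lemma inner_nu_sum (ω : ℕ → Fin p) (n : ℕ) :
    ∑ i, ⟪mu A y η x ω n i - lamdag i, (A i) (x ω n - xdag)⟫
      = ⟪wseq xdag x ω n, x ω n - xdag⟫ := by
  rw [w_eq_nu hx0 hx hdag hsource, sum_inner]
  exact Finset.sum_congr rfl fun i _ =>
    (ContinuousLinearMap.adjoint_inner_left (A i) _ _).symm


variable (hη : ∀ i, 0 < η i ∧ η i < 1 / ‖A i‖ ^ 2)

lemma weighted_norm_step {F : Type*} [NormedAddCommGroup F] [InnerProductSpace ℝ F]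
    (a v : F) (t : ℝ) (ht : t ≠ 0) :
    t⁻¹ * ‖a - t • v‖ ^ 2 = t⁻¹ * ‖a‖ ^ 2 + (-(2 * ⟪a, v⟫) + t * ‖v‖ ^ 2) := by
  rw [norm_sub_sq_real, real_inner_smul_right, norm_smul, mul_pow, Real.norm_eq_abs, sq_abs]
  field_simp
  ring

include hdag hη in
lemma Phi_step (ω : ℕ → Fin p) (n : ℕ) :
    Phi A y η lamdag x ω (n + 1)
      = Phi A y η lamdag x ω n
        - 2 * ⟪mu A y η x ω n (ω n) - lamdag (ω n), (A (ω n)) (x ω n - xdag)⟫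
        + η (ω n) * ‖(A (ω n)) (x ω n - xdag)‖ ^ 2 := by
  have hy : (A (ω n)) (x ω n) - y (ω n) = (A (ω n)) (x ω n - xdag) := by
    rw [map_sub, hdag]
  have key : ∀ i : Fin p, (η i)⁻¹ * ‖mu A y η x ω (n + 1) i - lamdag i‖ ^ 2
      = (η i)⁻¹ * ‖mu A y η x ω n i - lamdag i‖ ^ 2
        + (if i = ω n then
            (- (2 * ⟪mu A y η x ω n (ω n) - lamdag (ω n), (A (ω n)) (x ω n - xdag)⟫)
              + η (ω n) * ‖(A (ω n)) (x ω n - xdag)‖ ^ 2) else 0) := by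
    intro i
    show (η i)⁻¹ * ‖(mu A y η x ω n i - if i = ω n then η i • ((A i) (x ω n) - y i) else 0)
        - lamdag i‖ ^ 2 = _
    by_cases hi : i = ω n
    · subst hi
      rw [if_pos rfl, if_pos rfl, hy, sub_right_comm]
      exact weighted_norm_step _ _ _ (ne_of_gt (hη (ω n)).1)
    · rw [if_neg hi, if_neg hi, sub_zero, add_zero]
  rw [Phi, Finset.sum_congr rfl fun i _ => key i, Finset.sum_add_distrib,
    Finset.sum_ite_eq' Finset.univ (ω n)]
  simp only [Finset.mem_univ, if_true]
  rw [Phi]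
  ring

include hx hdag in
lemma wnorm_step (ω : ℕ → Fin p) (n : ℕ) :
    ‖wseq xdag x ω (n + 1)‖ ^ 2
      = ‖wseq xdag x ω n‖ ^ 2
        - 2 * η (ω n) * ⟪(A (ω n)) (x ω n - xdag), (A (ω n)) (wseq xdag x ω n)⟫
        + (η (ω n)) ^ 2 * ‖(A (ω n)).adjoint ((A (ω n)) (x ω n - xdag))‖ ^ 2 := by
  rw [w_rec hx hdag, norm_sub_sq_real, real_inner_smul_right, norm_smul, mul_pow,
    Real.norm_eq_abs, sq_abs, ContinuousLinearMap.adjoint_inner_right,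
    real_inner_comm ((A (ω n)) (wseq xdag x ω n))]
  ring


include hx0 hx hdag hsource hη in
lemma key_step {c₀ : ℝ} (hc0 : 0 < c₀) (hub : ∀ i, η i * ‖A i‖ ^ 2 ≤ 1 - c₀)
    (ω : ℕ → Fin p) (n : ℕ) :
    ∑ i : Fin p, Lyap A y η lamdag xdag x c₀ (Function.update ω n i) (n + 1)
      ≤ (p : ℝ) * Lyap A y η lamdag xdag x c₀ ω n := by
  have hxx : ∀ i : Fin p, x (Function.update ω n i) n = x ω n := fun i =>
    x_dep hx0 hx n _ _ (fun k hk => by rw [Function.update_of_ne (show k ≠ n by omega)])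
  have hxx' : ∀ i : Fin p, x (Function.update ω n i) (n - 1) = x ω (n - 1) := fun i =>
    x_dep hx0 hx (n - 1) _ _ (fun k hk => by rw [Function.update_of_ne (show k ≠ n by omega)])
  have hmm : ∀ i : Fin p, mu A y η x (Function.update ω n i) n = mu A y η x ω n := fun i =>
    mu_dep hx0 hx n _ _ (fun k hk => by rw [Function.update_of_ne (show k ≠ n by omega)])
  have hpp : ∀ i : Fin p, Phi A y η lamdag x (Function.update ω n i) n
      = Phi A y η lamdag x ω n := by
    intro i; unfold Phi; rw [hmm i]
  have hww : ∀ i : Fin p, wseq xdag x (Function.update ω n i) n = wseq xdag x ω n := by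
    intro i; unfold wseq; rw [hxx i, hxx' i]
  have hRR : ∀ i : Fin p, Rres A η xdag x (Function.update ω n i) n
      = Rres A η xdag x ω n := by
    intro i; unfold Rres; rw [hxx i]
  have hupn : ∀ i : Fin p, (Function.update ω n i) n = i := fun i => by simp
  have hLy : ∀ i : Fin p, Lyap A y η lamdag xdag x c₀ (Function.update ω n i) (n + 1)
      = ((p : ℝ) * Phi A y η lamdag x ω n + ((p : ℝ) / c₀) * ‖wseq xdag x ω n‖ ^ 2
          + ((n : ℝ) + 1) * ‖x ω n - xdag‖ ^ 2
          + (((n : ℝ) + 1) / c₀) * Rres A η xdag x ω n)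
        + (-(2 * (p : ℝ)) * ⟪mu A y η x ω n i - lamdag i, (A i) (x ω n - xdag)⟫
          + (p : ℝ) * (η i * ‖(A i) (x ω n - xdag)‖ ^ 2)
          + (-(2 * (p : ℝ) / c₀)) * (η i * ⟪(A i) (x ω n - xdag), (A i) (wseq xdag x ω n)⟫)
          + ((p : ℝ) / c₀) * ((η i) ^ 2 * ‖(A i).adjoint ((A i) (x ω n - xdag))‖ ^ 2)) := by
    intro i
    rw [Lyap, Phi_step hdag hη _ n, wnorm_step hx hdag _ n, hupn i]
    simp only [Nat.add_sub_cancel, hxx i, hxx' i, hmm i, hpp i, hww i, hRR i]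
    push_cast
    ring
  rw [Finset.sum_congr rfl fun i _ => hLy i]
  simp only [Finset.sum_add_distrib, ← Finset.mul_sum, Finset.sum_const, Finset.card_univ,
    Fintype.card_fin, nsmul_eq_mul]
  rw [inner_nu_sum hx0 hx hdag hsource ω n,
    show (∑ i, η i * ‖(A i) (x ω n - xdag)‖ ^ 2) = Rres A η xdag x ω n from rfl, Lyap]
  -- abbreviations
  have hwE : wseq xdag x ω n = (x ω n - xdag) + (n : ℝ) • ((x ω n - xdag) - (x ω (n - 1) - xdag)) := by
    rw [wseq, sub_sub_sub_cancel_right]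
  have hEsum : ((n : ℝ) + 2) * ‖x ω n - xdag‖ ^ 2 - (n : ℝ) * ‖x ω (n - 1) - xdag‖ ^ 2
      ≤ 2 * ⟪wseq xdag x ω n, x ω n - xdag⟫ := by
    rw [hwE]
    exact two_inner_ge _ _ _ (Nat.cast_nonneg n)
  have hKsum : ((n : ℝ) + 2) * Rres A η xdag x ω n - (n : ℝ) * Rres A η xdag x ω (n - 1)
      ≤ 2 * ∑ i, η i * ⟪(A i) (x ω n - xdag), (A i) (wseq xdag x ω n)⟫ := by
    have per : ∀ i : Fin p,
        η i * (((n : ℝ) + 2) * ‖(A i) (x ω n - xdag)‖ ^ 2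
          - (n : ℝ) * ‖(A i) (x ω (n - 1) - xdag)‖ ^ 2)
        ≤ η i * (2 * ⟪(A i) (x ω n - xdag), (A i) (wseq xdag x ω n)⟫) := by
      intro i
      apply mul_le_mul_of_nonneg_left _ (le_of_lt (hη i).1)
      have hAw : (A i) (wseq xdag x ω n)
          = (A i) (x ω n - xdag) + (n : ℝ) • ((A i) (x ω n - xdag) - (A i) (x ω (n - 1) - xdag)) := by
        rw [hwE]
        simp only [map_add, map_smul, map_sub]
      calc ((n : ℝ) + 2) * ‖(A i) (x ω n - xdag)‖ ^ 2 - (n : ℝ) * ‖(A i) (x ω (n - 1) - xdag)‖ ^ 2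
          ≤ 2 * ⟪(A i) (x ω n - xdag) + (n : ℝ) • ((A i) (x ω n - xdag) - (A i) (x ω (n - 1) - xdag)),
              (A i) (x ω n - xdag)⟫ := two_inner_ge _ _ _ (Nat.cast_nonneg n)
        _ = 2 * ⟪(A i) (x ω n - xdag), (A i) (wseq xdag x ω n)⟫ := by
            rw [hAw, real_inner_comm]
    have hL : ∑ i, η i * (((n : ℝ) + 2) * ‖(A i) (x ω n - xdag)‖ ^ 2
          - (n : ℝ) * ‖(A i) (x ω (n - 1) - xdag)‖ ^ 2)
        = ((n : ℝ) + 2) * Rres A η xdag x ω n - (n : ℝ) * Rres A η xdag x ω (n - 1) := by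
      rw [Rres, Rres, Finset.mul_sum, Finset.mul_sum, ← Finset.sum_sub_distrib]
      exact Finset.sum_congr rfl fun i _ => by ring
    have hR : ∑ i, η i * (2 * ⟪(A i) (x ω n - xdag), (A i) (wseq xdag x ω n)⟫)
        = 2 * ∑ i, η i * ⟪(A i) (x ω n - xdag), (A i) (wseq xdag x ω n)⟫ := by
      rw [Finset.mul_sum]
      exact Finset.sum_congr rfl fun i _ => by ring
    rw [← hL, ← hR]
    exact Finset.sum_le_sum fun i _ => per i
  have hLsum : ∑ i, (η i) ^ 2 * ‖(A i).adjoint ((A i) (x ω n - xdag))‖ ^ 2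
      ≤ (1 - c₀) * Rres A η xdag x ω n := by
    rw [Rres, Finset.mul_sum]
    refine Finset.sum_le_sum fun i _ => ?_
    have h1 : ‖(A i).adjoint ((A i) (x ω n - xdag))‖ ≤ ‖A i‖ * ‖(A i) (x ω n - xdag)‖ :=
      adj_apply_norm_le _ _
    calc (η i) ^ 2 * ‖(A i).adjoint ((A i) (x ω n - xdag))‖ ^ 2
        ≤ (η i) ^ 2 * (‖A i‖ ^ 2 * ‖(A i) (x ω n - xdag)‖ ^ 2) := by
          apply mul_le_mul_of_nonneg_left _ (sq_nonneg _)
          calc ‖(A i).adjoint ((A i) (x ω n - xdag))‖ ^ 2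
              ≤ (‖A i‖ * ‖(A i) (x ω n - xdag)‖) ^ 2 :=
                pow_le_pow_left₀ (norm_nonneg _) h1 2
            _ = ‖A i‖ ^ 2 * ‖(A i) (x ω n - xdag)‖ ^ 2 := by ring
      _ = (η i * ‖A i‖ ^ 2) * (η i * ‖(A i) (x ω n - xdag)‖ ^ 2) := by ring
      _ ≤ (1 - c₀) * (η i * ‖(A i) (x ω n - xdag)‖ ^ 2) := by
          apply mul_le_mul_of_nonneg_right (hub i)
          have := (hη i).1
          positivity
  have hp0 : (0 : ℝ) ≤ (p : ℝ) := Nat.cast_nonneg p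
  have S1 : (p : ℝ) * (((n : ℝ) + 2) * ‖x ω n - xdag‖ ^ 2 - (n : ℝ) * ‖x ω (n - 1) - xdag‖ ^ 2)
      ≤ (p : ℝ) * (2 * ⟪wseq xdag x ω n, x ω n - xdag⟫) :=
    mul_le_mul_of_nonneg_left hEsum hp0
  have S2 : ((p : ℝ) * c₀⁻¹) * (((n : ℝ) + 2) * Rres A η xdag x ω n
        - (n : ℝ) * Rres A η xdag x ω (n - 1))
      ≤ ((p : ℝ) * c₀⁻¹) * (2 * ∑ i, η i * ⟪(A i) (x ω n - xdag), (A i) (wseq xdag x ω n)⟫) :=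
    mul_le_mul_of_nonneg_left hKsum (by positivity)
  have S3 : ((p : ℝ) * c₀⁻¹) * (∑ i, (η i) ^ 2 * ‖(A i).adjoint ((A i) (x ω n - xdag))‖ ^ 2)
      ≤ ((p : ℝ) * c₀⁻¹) * ((1 - c₀) * Rres A η xdag x ω n) :=
    mul_le_mul_of_nonneg_left hLsum (by positivity)
  have hiden : ((p : ℝ) * c₀⁻¹) * ((1 - c₀) * Rres A η xdag x ω n)
      = (p : ℝ) * c₀⁻¹ * Rres A η xdag x ω n - (p : ℝ) * Rres A η xdag x ω n := by
    field_simp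
  have hEn : (0 : ℝ) ≤ (p : ℝ) * ‖x ω n - xdag‖ ^ 2 := by positivity
  simp only [div_eq_mul_inv]
  linarith [S1, S2, S3, hiden, hEn]


end rec

end main

end SHBMaux

/-- **Lemma SHBM.thm1 (convergence rate with exact data).**  Assume
`0 < η i < 1/‖A i‖²` and that the `x₀`-minimal norm solution `x†` of `A x = y`
satisfies the source condition `x† − x₀ = A* λ†`.  Then the exact-data heavy-ball
iterates satisfy, for all `n ≥ 0`,
`E[‖x n − x†‖²] ≤ p M₀ / (c₀ (n+1))`, where `c₀ = min_i (1 − η i ‖A i‖²)` and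
`M₀ = ‖x₀ − x†‖² + c₀ ∑_i (1/η i) ‖λ† i‖²`. -/
theorem stmt_9 {p : ℕ} (hp : 0 < p) {X : Type*} [NormedAddCommGroup X]
    [InnerProductSpace ℝ X] [CompleteSpace X]
    {Y : Fin p → Type*} [∀ i, NormedAddCommGroup (Y i)] [∀ i, InnerProductSpace ℝ (Y i)]
    [∀ i, CompleteSpace (Y i)]
    (A : ∀ i, X →L[ℝ] Y i) (y : ∀ i, Y i)
    (η : Fin p → ℝ) (hη : ∀ i, 0 < η i ∧ η i < 1 / ‖A i‖ ^ 2)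
    (c₀ : ℝ) (hc₀ : IsLeast (Set.range fun i => 1 - η i * ‖A i‖ ^ 2) c₀)
    (x₀ xdag : X)
    (hdag : ∀ i, (A i) xdag = y i)
    (hmin : ∀ x' : X, (∀ i, (A i) x' = y i) → ‖xdag - x₀‖ ≤ ‖x' - x₀‖)
    (lamdag : ∀ j, Y j)
    (hsource : xdag - x₀ = ∑ j, (A j).adjoint (lamdag j))
    (M₀ : ℝ) (hM₀ : M₀ = ‖x₀ - xdag‖ ^ 2 + c₀ * ∑ i, (η i)⁻¹ * ‖lamdag i‖ ^ 2)
    (x : (ℕ → Fin p) → ℕ → X)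
    (hx0 : ∀ ω, x ω 0 = x₀)
    (hx : ∀ ω, ∀ n : ℕ, x ω (n + 1) = x ω n
      - (((n : ℝ) + 2)⁻¹ * η (ω n)) • ((A (ω n)).adjoint ((A (ω n)) (x ω n) - y (ω n)))
      + ((n : ℝ) / ((n : ℝ) + 2)) • (x ω n - x ω (n - 1))) :
    ∀ n : ℕ,
      avg p hp n (fun ω => ‖x ω n - xdag‖ ^ 2) ≤ p * M₀ / (c₀ * ((n : ℝ) + 1)) := by
  classical
  intro n
  obtain ⟨⟨j, hj⟩, hlb⟩ := hc₀
  have hAi : ∀ i, 0 < ‖A i‖ ^ 2 := by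
    intro i
    rcases (sq_nonneg ‖A i‖).eq_or_lt with h | h
    · exfalso
      have h2 := (hη i).2
      rw [← h, div_zero] at h2
      linarith [(hη i).1]
    · exact h
  have hj' : 1 - η j * ‖A j‖ ^ 2 = c₀ := hj
  have hc0 : 0 < c₀ := by
    rw [← hj']
    have h2 := (hη j).2
    have := (lt_div_iff₀ (hAi j)).mp h2
    linarith
  have hub : ∀ i, η i * ‖A i‖ ^ 2 ≤ 1 - c₀ := by
    intro i
    have := hlb ⟨i, rfl⟩
    simp only at this
    linarith
  -- step inequality for the Lyapunov expectation
  have hstep : ∀ m : ℕ,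
      avg p hp (m + 1) (fun ω => SHBMaux.Lyap A y η lamdag xdag x c₀ ω (m + 1))
        ≤ avg p hp m (fun ω => SHBMaux.Lyap A y η lamdag xdag x c₀ ω m) := by
    intro m
    exact SHBMaux.avg_succ_le hp m _ _
      (fun ω => SHBMaux.key_step hx0 hx hdag hsource hη hc0 hub ω m)
  have hmono : ∀ m : ℕ,
      avg p hp m (fun ω => SHBMaux.Lyap A y η lamdag xdag x c₀ ω m)
        ≤ avg p hp 0 (fun ω => SHBMaux.Lyap A y η lamdag xdag x c₀ ω 0) := by
    intro m
    induction m with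
    | zero => exact le_refl _
    | succ k ih => exact (hstep k).trans ih
  -- value at time 0
  have hS0 : avg p hp 0 (fun ω => SHBMaux.Lyap A y η lamdag xdag x c₀ ω 0)
      = (p : ℝ) * M₀ / c₀ := by
    rw [SHBMaux.avg_zero_level]
    unfold SHBMaux.Lyap
    have hmu0 : ∀ i : Fin p, SHBMaux.mu A y η x (fun _ => (⟨0, hp⟩ : Fin p)) 0 i = 0 := by
      intro i; rfl
    have hw0 : SHBMaux.wseq xdag x (fun _ => (⟨0, hp⟩ : Fin p)) 0 = x₀ - xdag := by
      unfold SHBMaux.wseq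
      rw [hx0]
      simp
    unfold SHBMaux.Phi
    simp only [hmu0, zero_sub, norm_neg, hw0, Nat.cast_zero, zero_mul, zero_div, add_zero]
    rw [hM₀]
    field_simp
    ring
  -- lower bound of the Lyapunov integrand
  have hpos : ∀ ω, ((n : ℝ) + 1) * ‖x ω n - xdag‖ ^ 2
      ≤ SHBMaux.Lyap A y η lamdag xdag x c₀ ω (n + 1) := by
    intro ω
    have hPhi : 0 ≤ SHBMaux.Phi A y η lamdag x ω (n + 1) :=
      Finset.sum_nonneg fun i _ => by
        have := (hη i).1
        positivity
    have hRr : 0 ≤ SHBMaux.Rres A η xdag x ω n :=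
      Finset.sum_nonneg fun i _ => by
        have := (hη i).1
        positivity
    have h1 : 0 ≤ (p : ℝ) * SHBMaux.Phi A y η lamdag x ω (n + 1) :=
      mul_nonneg (Nat.cast_nonneg p) hPhi
    have h2 : 0 ≤ ((p : ℝ) / c₀) * ‖SHBMaux.wseq xdag x ω (n + 1)‖ ^ 2 := by positivity
    have h3 : 0 ≤ (((n : ℝ) + 1) / c₀) * SHBMaux.Rres A η xdag x ω n := by
      apply mul_nonneg _ hRr
      positivity
    unfold SHBMaux.Lyap
    simp only [Nat.add_sub_cancel]
    push_cast
    linarith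
  -- put everything together
  have hred : avg p hp (n + 1) (fun ω => ‖x ω n - xdag‖ ^ 2)
      = avg p hp n (fun ω => ‖x ω n - xdag‖ ^ 2) := by
    apply SHBMaux.avg_reduce hp n
    intro ω i
    rw [SHBMaux.x_dep hx0 hx n _ _
      (fun k hk => by rw [Function.update_of_ne (show k ≠ n by omega)])]
  have hchain : ((n : ℝ) + 1) * avg p hp n (fun ω => ‖x ω n - xdag‖ ^ 2)
      ≤ (p : ℝ) * M₀ / c₀ := by
    calc ((n : ℝ) + 1) * avg p hp n (fun ω => ‖x ω n - xdag‖ ^ 2)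
        = ((n : ℝ) + 1) * avg p hp (n + 1) (fun ω => ‖x ω n - xdag‖ ^ 2) := by rw [hred]
      _ = avg p hp (n + 1) (fun ω => ((n : ℝ) + 1) * ‖x ω n - xdag‖ ^ 2) := by
          rw [SHBMaux.avg_const_mul]
      _ ≤ avg p hp (n + 1) (fun ω => SHBMaux.Lyap A y η lamdag xdag x c₀ ω (n + 1)) :=
          SHBMaux.avg_mono hp (n + 1) _ _ hpos
      _ ≤ avg p hp 0 (fun ω => SHBMaux.Lyap A y η lamdag xdag x c₀ ω 0) := hmono (n + 1)
      _ = (p : ℝ) * M₀ / c₀ := hS0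
  have hn1 : (0 : ℝ) < (n : ℝ) + 1 := by positivity
  rw [show c₀ * ((n : ℝ) + 1) = c₀ * ((n : ℝ) + 1) from rfl, ← div_div,
    le_div_iff₀ hn1]
  linarith
end

section
/- Let (i_n)_{n≥0} be an arbitrary sequence of indices in {1, …, p}, and let (x_n, z_n) and (x̂_n, ẑ_n) be two heavy-ball iterate sequences generated with the same indices and step sizes but different initial points x₀ and x̂₀. Then for every integer n ≥ 0 there holds ‖z_{n+1} − ẑ_{n+1}‖² ≤ ‖z_n − ẑ_n‖² + n η_{i_n} ‖A_{i_n}(x_{n−1} − x̂_{n−1})‖² − (n + 2 − η_{i_n} ‖A_{i_n}‖²) η_{i_n} ‖A_{i_n}(x_n − x̂_n)‖². -/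
open scoped RealInnerProductSpace


set_option maxHeartbeats 1000000 in
/-- **One-step stability estimate for two heavy-ball sequences with different initial
points (pathwise part of Lemma IMA.lem1.3).**  Let `X`, `Y i` be real Hilbert spaces,
`A i : X →L[ℝ] Y i`, `y i ∈ Y i`, `η i > 0`, and `(i_n)` an arbitrary sequence of
indices.  Let `(x, z)` and `(x̂, ẑ)` be the heavy-ball iterate sequences (in the
moving-average form `z (n+1) = z n − η (i n) • (A (i n))*(A (i n) (x n) − y (i n))`,
`x (n+1) = ((n+1) • x n + z (n+1))/(n+2)`) generated with the same indices, data, and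
step sizes but initial points `x₀` and `x̂₀`.  Then for every `n ≥ 0`:
`‖z (n+1) − ẑ (n+1)‖² ≤ ‖z n − ẑ n‖² + n η (i n) ‖A (i n) (x (n−1) − x̂ (n−1))‖²
  − (n + 2 − η (i n) ‖A (i n)‖²) η (i n) ‖A (i n) (x n − x̂ n)‖²`. -/
theorem stmt_12 {p : ℕ} {X : Type*} [NormedAddCommGroup X] [InnerProductSpace ℝ X]
    [CompleteSpace X]
    {Y : Fin p → Type*} [∀ i, NormedAddCommGroup (Y i)] [∀ i, InnerProductSpace ℝ (Y i)]
    [∀ i, CompleteSpace (Y i)]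
    (A : ∀ i, X →L[ℝ] Y i) (y : ∀ i, Y i)
    (η : Fin p → ℝ) (hη : ∀ i, 0 < η i)
    (i : ℕ → Fin p) (x₀ xh₀ : X) (x z xh zh : ℕ → X)
    (hx0 : x 0 = x₀) (hz0 : z 0 = x₀)
    (hxh0 : xh 0 = xh₀) (hzh0 : zh 0 = xh₀)
    (hz : ∀ n : ℕ, z (n + 1) =
      z n - η (i n) • ((A (i n)).adjoint ((A (i n)) (x n) - y (i n))))
    (hx : ∀ n : ℕ, x (n + 1) = ((n : ℝ) + 2)⁻¹ • (((n : ℝ) + 1) • x n + z (n + 1)))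
    (hzh : ∀ n : ℕ, zh (n + 1) =
      zh n - η (i n) • ((A (i n)).adjoint ((A (i n)) (xh n) - y (i n))))
    (hxh : ∀ n : ℕ, xh (n + 1) = ((n : ℝ) + 2)⁻¹ • (((n : ℝ) + 1) • xh n + zh (n + 1))) :
    ∀ n : ℕ,
      ‖z (n + 1) - zh (n + 1)‖ ^ 2 ≤ ‖z n - zh n‖ ^ 2
        + (n : ℝ) * η (i n) * ‖(A (i n)) (x (n - 1) - xh (n - 1))‖ ^ 2
        - ((n : ℝ) + 2 - η (i n) * ‖A (i n)‖ ^ 2) * η (i n)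
            * ‖(A (i n)) (x n - xh n)‖ ^ 2 := by
  intro n
  set T := A (i n) with hT
  set e := η (i n) with he'
  have hepos := hη (i n)
  -- z m - zh m = (m+1) • (x m - xh m) - m • (x (m-1) - xh (m-1))
  have hd : ∀ m : ℕ, z m - zh m =
      ((m : ℝ) + 1) • (x m - xh m) - (m : ℝ) • (x (m - 1) - xh (m - 1)) := by
    intro m
    cases m with
    | zero => simp [hz0, hzh0, hx0, hxh0]
    | succ k =>
      have hk : ((k : ℝ) + 2) ≠ 0 := by positivity
      have h1 : ((k : ℝ) + 2) • x (k + 1) = ((k : ℝ) + 1) • x k + z (k + 1) := by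
        rw [hx k, smul_inv_smul₀ hk]
      have h2 : ((k : ℝ) + 2) • xh (k + 1) = ((k : ℝ) + 1) • xh k + zh (k + 1) := by
        rw [hxh k, smul_inv_smul₀ hk]
      have hz1 : z (k + 1) = ((k : ℝ) + 2) • x (k + 1) - ((k : ℝ) + 1) • x k := by
        rw [h1]; abel
      have hz2 : zh (k + 1) = ((k : ℝ) + 2) • xh (k + 1) - ((k : ℝ) + 1) • xh k := by
        rw [h2]; abel
      rw [hz1, hz2]
      simp only [Nat.add_sub_cancel]
      push_cast
      module
  have key : z (n + 1) - zh (n + 1) =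
      (z n - zh n) - e • (T.adjoint (T (x n - xh n))) := by
    rw [hz n, hzh n]
    have : T.adjoint (T (x n) - y (i n)) - T.adjoint (T (xh n) - y (i n))
        = T.adjoint (T (x n - xh n)) := by
      rw [← map_sub, sub_sub_sub_cancel_right, ← map_sub]
    rw [← this, smul_sub]
    abel
  set u := T (x n - xh n) with hu
  set v := T (x (n - 1) - xh (n - 1)) with hv
  have hip : (inner ℝ (z n - zh n) (T.adjoint u) : ℝ) = ((n : ℝ) + 1) * ‖u‖ ^ 2 - (n : ℝ) * (inner ℝ v u : ℝ) := by
    rw [ContinuousLinearMap.adjoint_inner_right, hd n, map_sub, map_smul, map_smul,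
      inner_sub_left, real_inner_smul_left, real_inner_smul_left, ← hu, ← hv,
      real_inner_self_eq_norm_sq]
  have hexp : ‖z (n + 1) - zh (n + 1)‖ ^ 2 =
      ‖z n - zh n‖ ^ 2 - 2 * (e * (((n : ℝ) + 1) * ‖u‖ ^ 2 - (n : ℝ) * (inner ℝ v u : ℝ)))
        + e ^ 2 * ‖T.adjoint u‖ ^ 2 := by
    rw [key, @norm_sub_sq_real, real_inner_smul_right, hip, norm_smul,
      Real.norm_eq_abs, mul_pow, sq_abs]
  have hTadj : ‖T.adjoint u‖ ≤ ‖T‖ * ‖u‖ := by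
    calc ‖T.adjoint u‖ ≤ ‖T.adjoint‖ * ‖u‖ := T.adjoint.le_opNorm u
    _ = ‖T‖ * ‖u‖ := by rw [LinearIsometryEquiv.norm_map ContinuousLinearMap.adjoint T]
  have hTadj2 : ‖T.adjoint u‖ ^ 2 ≤ ‖T‖ ^ 2 * ‖u‖ ^ 2 := by
    rw [← mul_pow]
    exact pow_le_pow_left₀ (norm_nonneg _) hTadj 2
  have hvu : (inner ℝ v u : ℝ) ≤ ‖v‖ * ‖u‖ := real_inner_le_norm v u
  have h2 : 2 * ‖v‖ * ‖u‖ ≤ ‖v‖ ^ 2 + ‖u‖ ^ 2 := two_mul_le_add_sq ‖v‖ ‖u‖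
  have hn : (0 : ℝ) ≤ (n : ℝ) := Nat.cast_nonneg n
  rw [hexp]
  nlinarith [mul_nonneg hn hepos.le, sq_nonneg e,
    mul_le_mul_of_nonneg_left hTadj2 (sq_nonneg e),
    mul_le_mul_of_nonneg_left (hvu.trans_eq rfl) (mul_nonneg hn hepos.le),
    mul_le_mul_of_nonneg_left h2 (mul_nonneg hn hepos.le)]
end

section
/- Let (a_n)_{n≥0} and (b_n)_{n≥0} be two sequences of nonnegative real numbers such that a_n² ≤ b_n² + c Σ_{j=0}^{n−1} a_j for all n = 0, 1, 2, …, where c ≥ 0 is a constant. If (b_n) is non-decreasing, then a_n ≤ b_n + c n for all n = 0, 1, 2, …. -/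
/-- **Lemma (rbdgm.lem4).** Let `(a n)` and `(b n)` be sequences of nonnegative real
numbers with `a n ^ 2 ≤ b n ^ 2 + c * ∑_{j=0}^{n-1} a j` for all `n`, where `c ≥ 0`.
If `(b n)` is non-decreasing then `a n ≤ b n + c * n` for all `n`. -/
theorem stmt_16 (a b : ℕ → ℝ) (c : ℝ) (hc : 0 ≤ c)
    (ha : ∀ n, 0 ≤ a n) (hb : ∀ n, 0 ≤ b n)
    (h : ∀ n, (a n) ^ 2 ≤ (b n) ^ 2 + c * ∑ j ∈ Finset.range n, a j)
    (hbmono : Monotone b) :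
    ∀ n, a n ≤ b n + c * n := by
  intro n
  induction n using Nat.strong_induction_on with
  | _ n ih =>
    have hsum : ∑ j ∈ Finset.range n, a j ≤ n * (b n + c * n) := by
      calc ∑ j ∈ Finset.range n, a j ≤ ∑ j ∈ Finset.range n, (b n + c * n) := by
            apply Finset.sum_le_sum
            intro j hj
            have hj' := Finset.mem_range.mp hj
            calc a j ≤ b j + c * j := ih j hj'
              _ ≤ b n + c * n := by
                have := hbmono hj'.le
                have : (j : ℝ) ≤ n := Nat.cast_le.mpr hj'.le
                gcongr
        _ = n * (b n + c * n) := by simp; ring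
    have hsq : (a n) ^ 2 ≤ (b n + c * n) ^ 2 := by
      have h1 := h n
      have h2 : c * ∑ j ∈ Finset.range n, a j ≤ c * (n * (b n + c * n)) :=
        mul_le_mul_of_nonneg_left hsum hc
      have hbn := hb n
      have hn : (0:ℝ) ≤ n := Nat.cast_nonneg n
      nlinarith [mul_nonneg hc hn, mul_nonneg hbn hn, mul_nonneg hc (mul_nonneg hbn hn)]
    have hd : 0 ≤ b n + c * n := add_nonneg (hb n) (mul_nonneg hc (Nat.cast_nonneg n))
    nlinarith [hsq, ha n, hd]
end
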